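/- arXiv:2405.14581 — 14 statements merged into one kernel-verified Lean document; each statement's English description precedes it below -/
import Mathlib

section
/- Let m ≥ 1 and let B be a finite nontrivial Boolean algebra having at most m atoms, and let B̄ = WithTop B carry the pseudocomplementation x* = xᶜ for x ∈ B with x ≠ ⊥, ⊥* = ⊤, ⊤* = ⊥. Then for any elements x₁, …, x_{m+1} ∈ B̄, the identity ⨆_{i=1}^{m+1} ( x_i ⊓ ⨅_{j≠i} x_j* )* = ⊤ holds. -/
open Classical in
/-- The pseudocomplementation on `WithTop B` for a Boolean algebra `B`:
`x* = xᶜ` for `x ∈ B`, `x ≠ ⊥`; `⊥* = ⊤`; `⊤* = ⊥`. -/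
noncomputable def tstar {B : Type*} [BooleanAlgebra B] : WithTop B → WithTop B
  | ⊤ => ⊥
  | (b : B) => if b = ⊥ then ⊤ else ((bᶜ : B) : WithTop B)

section aux

variable {B : Type*} [BooleanAlgebra B]

open Classical in
lemma tstar_bot : tstar (⊥ : WithTop B) = ⊤ := by
  rw [← WithTop.coe_bot]
  simp [tstar]

open Classical in
lemma tstar_top' : tstar (⊤ : WithTop B) = ⊥ := rfl

open Classical in
lemma tstar_coe {b : B} (hb : b ≠ ⊥) : tstar (b : WithTop B) = ((bᶜ : B) : WithTop B) := by
  simp [tstar, hb]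

lemma inf_coe_eq {ι : Type*} (s : Finset ι) (hs : s.Nonempty) (g : ι → B) :
    s.inf (fun j => ((g j : B) : WithTop B)) = ((s.inf g : B) : WithTop B) := by
  induction hs using Finset.Nonempty.cons_induction with
  | singleton a => simp
  | cons a s ha hs ih => rw [Finset.inf_cons, ih, Finset.inf_cons, WithTop.coe_inf]

lemma inf_compl_eq {ι : Type*} (s : Finset ι) (g : ι → B) :
    s.inf (fun j => (g j)ᶜ) = (s.sup g)ᶜ := by
  classical
  induction s using Finset.induction with
  | empty => simp
  | @insert a s h ih => rw [Finset.inf_insert, Finset.sup_insert, compl_sup, ih]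

open Classical in
lemma key_pigeonhole [Fintype B] (m : ℕ)
    (hatoms : Set.ncard {a : B | IsAtom a} ≤ m) (b : Fin (m + 1) → B) :
    ∃ i, b i ≤ (Finset.univ.erase i).sup b := by
  by_contra h
  push_neg at h
  have hA : ∀ i, ∃ a : B, IsAtom a ∧ a ≤ b i ⊓ ((Finset.univ.erase i).sup b)ᶜ := by
    intro i
    refine (eq_bot_or_exists_atom_le _).resolve_left ?_
    intro hc
    rw [← sdiff_eq] at hc
    exact h i (sdiff_eq_bot_iff.mp hc)
  choose a ha hle using hA
  have hinj : Function.Injective a := by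
    intro i j hij
    by_contra hne
    have h1 : a i ≤ b i := (hle i).trans inf_le_left
    have h2 : a i ≤ ((Finset.univ.erase j).sup b)ᶜ := hij ▸ ((hle j).trans inf_le_right)
    have h3 : b i ≤ (Finset.univ.erase j).sup b :=
      Finset.le_sup (Finset.mem_erase.mpr ⟨hne, Finset.mem_univ i⟩)
    have hbot : a i ≤ ⊥ := by
      calc a i ≤ b i ⊓ (b i)ᶜ := le_inf h1 (h2.trans (compl_le_compl h3))
        _ = ⊥ := inf_compl_eq_bot
    exact (ha i).1 (le_bot_iff.mp hbot)
  have hfinj : Function.Injective (fun i => (⟨a i, ha i⟩ : {c : B | IsAtom c})) := by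
    intro i j hij
    exact hinj (congrArg Subtype.val hij)
  have hcard := Nat.card_le_card_of_injective _ hfinj
  rw [Nat.card_eq_fintype_card, Fintype.card_fin, Nat.card_coe_set_eq] at hcard
  omega

end aux

open Classical in
/-- If `B` is a finite nontrivial Boolean algebra with at most `m` atoms (`m ≥ 1`), then
the identity `⨆ᵢ (xᵢ ⊓ ⨅_{j ≠ i} xⱼ*)* = ⊤` holds in `B̄ = WithTop B` for any
`x₁, …, x_{m+1}`. -/
theorem stmt2 {B : Type*} [BooleanAlgebra B] [Nontrivial B] [Fintype B]
    (m : ℕ) (hm : 1 ≤ m) (hatoms : Set.ncard {a : B | IsAtom a} ≤ m)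
    (x : Fin (m + 1) → WithTop B) :
    Finset.univ.sup
      (fun i => tstar (x i ⊓ (Finset.univ.erase i).inf (fun j => tstar (x j)))) = ⊤ := by
  have hnt : Nontrivial (Fin (m + 1)) := Fin.nontrivial_iff_two_le.mpr (by omega)
  suffices h : ∃ i, (x i ⊓ (Finset.univ.erase i).inf (fun j => tstar (x j))) = ⊥ by
    obtain ⟨i, hi⟩ := h
    have hle := Finset.le_sup (s := Finset.univ)
      (f := fun i => tstar (x i ⊓ (Finset.univ.erase i).inf (fun j => tstar (x j))))
      (Finset.mem_univ i)
    simp only [hi, tstar_bot] at hle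
    exact top_unique hle
  by_cases hbot : ∃ i, x i = ⊥
  · obtain ⟨i, hi⟩ := hbot
    exact ⟨i, by simp [hi]⟩
  push_neg at hbot
  by_cases htop : ∃ k, x k = ⊤
  · obtain ⟨k, hk⟩ := htop
    obtain ⟨i, hik⟩ := exists_ne k
    refine ⟨i, le_bot_iff.mp ?_⟩
    have hkmem : k ∈ Finset.univ.erase i :=
      Finset.mem_erase.mpr ⟨Ne.symm hik, Finset.mem_univ k⟩
    have hinf : (Finset.univ.erase i).inf (fun j => tstar (x j)) ≤ tstar (x k) :=
      Finset.inf_le hkmem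
    rw [hk, tstar_top'] at hinf
    exact inf_le_right.trans hinf
  push_neg at htop
  -- all x i are coercions of nonzero elements of B
  set b : Fin (m + 1) → B := fun i => (x i).untop (htop i) with hb
  have hxb : ∀ i, x i = (b i : WithTop B) := fun i => (WithTop.coe_untop _ (htop i)).symm
  have hbne : ∀ i, b i ≠ ⊥ := by
    intro i hc
    apply hbot i
    rw [hxb i, hc, WithTop.coe_bot]
  have htb : ∀ j, tstar (x j) = (((b j)ᶜ : B) : WithTop B) := by
    intro j
    rw [hxb j, tstar_coe (hbne j)]
  obtain ⟨i, hi⟩ := key_pigeonhole m hatoms b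
  refine ⟨i, ?_⟩
  have hne : (Finset.univ.erase i).Nonempty := by
    rw [← Finset.card_pos, Finset.card_erase_of_mem (Finset.mem_univ i), Finset.card_univ,
      Fintype.card_fin]
    omega
  calc x i ⊓ (Finset.univ.erase i).inf (fun j => tstar (x j))
      = (b i : WithTop B) ⊓ (Finset.univ.erase i).inf (fun j => (((b j)ᶜ : B) : WithTop B)) := by
        rw [hxb i]
        congr 1
        exact Finset.inf_congr rfl (fun j _ => htb j)
    _ = (b i : WithTop B) ⊓ (((Finset.univ.erase i).inf (fun j => (b j)ᶜ) : B) : WithTop B) := by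
        rw [inf_coe_eq _ hne]
    _ = ((b i ⊓ ((Finset.univ.erase i).sup b)ᶜ : B) : WithTop B) := by
        rw [inf_compl_eq, WithTop.coe_inf]
    _ = ((⊥ : B) : WithTop B) := by
        congr 1
        rw [← sdiff_eq]
        exact sdiff_eq_bot_iff.mpr hi
    _ = ⊥ := WithTop.coe_bot
end

section
/- Let A be a p-algebra and a, b ∈ A. If every congruence θ on A with a θ ⊤ also satisfies b θ ⊤, then a ≤ b in the lattice order of A. Consequently, if for all congruences θ on A one has a θ ⊤ if and only if b θ ⊤, then a = b (A is 1-congruence orderable). -/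
variable {A : Type*}

/-- A congruence of a p-algebra `(A, ⊓, ⊔, *, ⊥, ⊤)`: an equivalence relation
compatible with meet, join and the pseudocomplementation `star`. -/
def IsPCong [Lattice A] (star : A → A) (θ : A → A → Prop) : Prop :=
  Equivalence θ ∧
  (∀ a b c d : A, θ a b → θ c d → θ (a ⊓ c) (b ⊓ d)) ∧
  (∀ a b c d : A, θ a b → θ c d → θ (a ⊔ c) (b ⊔ d)) ∧
  (∀ a b : A, θ a b → θ (star a) (star b))

/-- A completely meet-irreducible congruence: a congruence `μ` such that whenever `μ`
is the intersection of a (possibly empty) family of congruences, `μ` belongs to the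
family.  (Taking the empty family, such a `μ` is never the total relation.) -/
def IsCMI [Lattice A] (star : A → A) (μ : A → A → Prop) : Prop :=
  IsPCong star μ ∧
  ∀ S : Set (A → A → Prop), (∀ θ ∈ S, IsPCong star θ) →
    (μ = fun a b => ∀ θ ∈ S, θ a b) → μ ∈ S

/-- A relation has exactly two equivalence classes. -/
def HasTwoClasses (θ : A → A → Prop) : Prop :=
  ∃ a b : A, ¬ θ a b ∧ ∀ c : A, θ c a ∨ θ c b

/-- A prime filter of a lattice: proper, nonempty, upward closed, closed under `⊓`,
and `a ⊔ b ∈ F` implies `a ∈ F` or `b ∈ F`. -/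
def IsPrimeFilter [Lattice A] (F : Set A) : Prop :=
  F.Nonempty ∧ F ≠ Set.univ ∧ (∀ a b : A, a ∈ F → a ≤ b → b ∈ F) ∧
  (∀ a b : A, a ∈ F → b ∈ F → a ⊓ b ∈ F) ∧
  (∀ a b : A, a ⊔ b ∈ F → a ∈ F ∨ b ∈ F)

theorem aux_pcong [DistribLattice A] [BoundedOrder A] (star : A → A)
    (hp : ∀ x y : A, x ⊓ y = ⊥ ↔ x ≤ star y) (a : A) :
    IsPCong star (fun x y : A => x ⊓ a = y ⊓ a) := by
  have hbot : ∀ x : A, star x ⊓ x = ⊥ := fun x => (hp (star x) x).mpr le_rfl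
  have hstar : ∀ x y : A, x ⊓ a = y ⊓ a → star x ⊓ a ≤ star y := by
    intro x y h
    rw [← hp]
    have : star x ⊓ a ⊓ y = star x ⊓ x ⊓ a := by
      rw [inf_assoc, inf_comm a y, ← h, ← inf_assoc]
    rw [this, hbot, bot_inf_eq]
  refine ⟨⟨fun x => rfl, fun h => h.symm, fun h1 h2 => h1.trans h2⟩, ?_, ?_, ?_⟩
  · intro x y c d h1 h2
    rw [inf_inf_distrib_right, h1, h2, ← inf_inf_distrib_right]
  · intro x y c d h1 h2
    rw [inf_comm _ a, inf_comm _ a, inf_sup_left, inf_sup_left,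
      inf_comm a x, inf_comm a c, inf_comm a y, inf_comm a d, h1, h2]
  · intro x y h
    exact le_antisymm (le_inf (hstar x y h) inf_le_right)
      (le_inf (hstar y x h.symm) inf_le_right)

theorem aux_main [DistribLattice A] [BoundedOrder A] (star : A → A)
    (hp : ∀ x y : A, x ⊓ y = ⊥ ↔ x ≤ star y) (a b : A)
    (h : ∀ θ : A → A → Prop, IsPCong star θ → θ a ⊤ → θ b ⊤) : a ≤ b := by
  have hc := aux_pcong star hp a
  have ha : a ⊓ a = ⊤ ⊓ a := by rw [inf_idem, top_inf_eq]
  have hb : b ⊓ a = ⊤ ⊓ a := h _ hc ha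
  rw [top_inf_eq] at hb
  exact le_of_inf_eq (by rw [inf_comm]; exact hb)

/-- Every p-algebra is 1-congruence orderable: if every congruence relating `a` to `⊤`
also relates `b` to `⊤`, then `a ≤ b`; consequently if `a θ ⊤ ↔ b θ ⊤` for all
congruences `θ`, then `a = b`. -/
theorem stmt3 [DistribLattice A] [BoundedOrder A] (star : A → A)
    (hp : ∀ x y : A, x ⊓ y = ⊥ ↔ x ≤ star y) (a b : A) :
    ((∀ θ : A → A → Prop, IsPCong star θ → θ a ⊤ → θ b ⊤) → a ≤ b) ∧
    ((∀ θ : A → A → Prop, IsPCong star θ → (θ a ⊤ ↔ θ b ⊤)) → a = b) := by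
  exact ⟨aux_main star hp a b, fun h =>
    le_antisymm (aux_main star hp a b fun θ hθ => (h θ hθ).mp)
      (aux_main star hp b a fun θ hθ => (h θ hθ).mpr)⟩
end

section
/- Let A be a p-algebra and μ a completely meet-irreducible congruence on A. Then the ⊤-class of μ, namely {a ∈ A : a μ ⊤}, is a prime filter of A. -/
variable {A : Type*}

private lemma star_inf_aux [DistribLattice A] [BoundedOrder A] (star : A → A)
    (hp : ∀ x y : A, x ⊓ y = ⊥ ↔ x ≤ star y) (x a : A) :
    star (x ⊓ a) ⊓ a = star x ⊓ a := by
  have hxx : ∀ u : A, star u ⊓ u = ⊥ := fun u => (hp _ _).mpr le_rfl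
  apply le_antisymm
  · refine le_inf ?_ inf_le_right
    refine (hp _ _).mp ?_
    have : (star (x ⊓ a) ⊓ a) ⊓ x = star (x ⊓ a) ⊓ (x ⊓ a) := by
      rw [inf_comm x a]; rw [inf_assoc]
    rw [this, hxx]
  · refine le_inf ?_ inf_le_right
    refine le_trans inf_le_left ?_
    refine (hp _ _).mp ?_
    have : star x ⊓ (x ⊓ a) = (star x ⊓ x) ⊓ a := by rw [inf_assoc]
    rw [this, hxx, bot_inf_eq]

private lemma pcong_rel [DistribLattice A] [BoundedOrder A] (star : A → A)
    (hp : ∀ x y : A, x ⊓ y = ⊥ ↔ x ≤ star y)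
    (μ : A → A → Prop) (hμ : IsPCong star μ) (a : A) :
    IsPCong star (fun x y => μ (x ⊓ a) (y ⊓ a)) := by
  obtain ⟨heq, hmeet, hjoin, hstar⟩ := hμ
  refine ⟨⟨fun x => heq.refl _, fun h => heq.symm h, fun h1 h2 => heq.trans h1 h2⟩,
    ?_, ?_, ?_⟩
  · intro x y c d h1 h2
    have := hmeet _ _ _ _ h1 h2
    have e : ∀ u v : A, (u ⊓ a) ⊓ (v ⊓ a) = (u ⊓ v) ⊓ a := by
      intro u v
      rw [inf_assoc, inf_comm a (v ⊓ a), inf_assoc v a a, inf_idem, ← inf_assoc]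
    rwa [e, e] at this
  · intro x y c d h1 h2
    have := hjoin _ _ _ _ h1 h2
    rwa [← inf_sup_right, ← inf_sup_right] at this
  · intro x y h
    have h1 := hstar _ _ h
    have h2 := hmeet _ _ _ _ h1 (heq.refl a)
    rwa [star_inf_aux star hp, star_inf_aux star hp] at h2

/-- The `⊤`-class of a completely meet-irreducible congruence of a p-algebra is a
prime filter. -/
theorem stmt4 [DistribLattice A] [BoundedOrder A] (star : A → A)
    (hp : ∀ x y : A, x ⊓ y = ⊥ ↔ x ≤ star y)
    (μ : A → A → Prop) (hμ : IsCMI star μ) :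
    IsPrimeFilter {a : A | μ a ⊤} := by
  obtain ⟨⟨heq, hmeet, hjoin, hstar⟩, hcmi⟩ := hμ
  have hrefl : ∀ x : A, μ x x := fun x => heq.refl x
  refine ⟨⟨⊤, hrefl ⊤⟩, ?_, ?_, ?_, ?_⟩
  · intro h
    have hall : ∀ x : A, μ x ⊤ := fun x => Set.eq_univ_iff_forall.mp h x
    have htot : μ = fun a b => ∀ θ ∈ (∅ : Set (A → A → Prop)), θ a b := by
      funext x y
      apply propext
      constructor
      · intro _ θ hθ; exact absurd hθ (Set.notMem_empty θ)
      · intro _; exact heq.trans (hall x) (heq.symm (hall y))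
    exact absurd (hcmi ∅ (fun θ hθ => absurd hθ (Set.notMem_empty θ)) htot)
      (Set.notMem_empty μ)
  · intro a b ha hab
    have h1 : μ (a ⊔ b) (⊤ ⊔ b) := hjoin _ _ _ _ ha (hrefl b)
    have : a ⊔ b = b := sup_eq_right.mpr hab
    rw [this, top_sup_eq] at h1
    exact h1
  · intro a b ha hb
    have := hmeet _ _ _ _ ha hb
    rwa [top_inf_eq] at this
  · intro a b hab
    by_contra hcon
    push_neg at hcon
    obtain ⟨hna, hnb⟩ := hcon
    set θa : A → A → Prop := fun x y => μ (x ⊓ a) (y ⊓ a) with hθa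
    set θb : A → A → Prop := fun x y => μ (x ⊓ b) (y ⊓ b) with hθb
    have hca : IsPCong star θa := pcong_rel star hp μ ⟨heq, hmeet, hjoin, hstar⟩ a
    have hcb : IsPCong star θb := pcong_rel star hp μ ⟨heq, hmeet, hjoin, hstar⟩ b
    set S : Set (A → A → Prop) := {θa, θb} with hS
    have hSc : ∀ θ ∈ S, IsPCong star θ := by
      intro θ hθ
      rcases hθ with h | h
      · exact h ▸ hca
      · exact h ▸ hcb
    have hint : μ = fun x y => ∀ θ ∈ S, θ x y := by
      funext x y
      apply propext
      constructor
      · intro hxy θ hθ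
        rcases hθ with h | h
        · subst h; exact hmeet _ _ _ _ hxy (hrefl a)
        · subst h; exact hmeet _ _ _ _ hxy (hrefl b)
      · intro hθ
        have h1 : μ (x ⊓ a) (y ⊓ a) := hθ θa (Or.inl rfl)
        have h2 : μ (x ⊓ b) (y ⊓ b) := hθ θb (Or.inr rfl)
        have h3 := hjoin _ _ _ _ h1 h2
        rw [← inf_sup_left, ← inf_sup_left] at h3
        have h4 : μ (x ⊓ (a ⊔ b)) (x ⊓ ⊤) := hmeet _ _ _ _ (hrefl x) hab
        have h5 : μ (y ⊓ (a ⊔ b)) (y ⊓ ⊤) := hmeet _ _ _ _ (hrefl y) hab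
        rw [inf_top_eq] at h4 h5
        exact heq.trans (heq.symm h4) (heq.trans h3 h5)
    have hmem := hcmi S hSc hint
    rcases hmem with h | h
    · apply hna
      have : θa a ⊤ := by show μ (a ⊓ a) (⊤ ⊓ a); rw [inf_idem, top_inf_eq]; exact hrefl a
      rw [h]; exact this
    · apply hnb
      have : θb b ⊤ := by show μ (b ⊓ b) (⊤ ⊓ b); rw [inf_idem, top_inf_eq]; exact hrefl b
      rw [h]; exact this
end

section
/- Let A be a p-algebra and let φ be a congruence on A that is the intersection of a family of congruences each having exactly two equivalence classes. Then for all a, b ∈ A the following are equivalent: (i) a φ b; (ii) ((a* ⊓ b*) ⊔ (a ⊓ b)) φ ⊤; (iii) ((a ⊔ b) ⊓ (a ⊓ b)*) φ ⊥. -/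
variable {A : Type*}

lemma two_class_iff [DistribLattice A] [BoundedOrder A] (star : A → A)
    (hp : ∀ x y : A, x ⊓ y = ⊥ ↔ x ≤ star y)
    (θ : A → A → Prop) (hθ : IsPCong star θ) (h2 : HasTwoClasses θ) (a b : A) :
    (θ a b ↔ θ ((star a ⊓ star b) ⊔ (a ⊓ b)) ⊤) ∧
    (θ a b ↔ θ ((a ⊔ b) ⊓ star (a ⊓ b)) ⊥) := by
  obtain ⟨heq, hm, hj, hs⟩ := hθ
  have star_top : star (⊤ : A) = ⊥ := by
    have := (hp (star ⊤) ⊤).mpr le_rfl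
    simpa using this
  have star_bot : star (⊥ : A) = ⊤ :=
    le_antisymm le_top ((hp ⊤ ⊥).mp (by simp))
  have meet_star : ∀ c : A, c ⊓ star c = ⊥ := by
    intro c
    have := (hp (star c) c).mpr le_rfl
    rwa [inf_comm] at this
  obtain ⟨x, y, hxy, hall⟩ := h2
  have hnTB : ¬ θ (⊤ : A) ⊥ := by
    intro hTB
    have hz : ∀ c : A, θ c ⊥ := fun c => by
      have : θ (c ⊓ ⊤) (c ⊓ ⊥) := hm _ _ _ _ (heq.refl c) hTB
      simpa using this
    exact hxy (heq.trans (hz x) (heq.symm (hz y)))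
  have hclass : ∀ c : A, θ c ⊤ ∨ θ c ⊥ := by
    intro c
    rcases hall ⊤ with hT | hT <;> rcases hall ⊥ with hB | hB
    · exact absurd (heq.trans hT (heq.symm hB)) hnTB
    · rcases hall c with hc | hc
      · exact Or.inl (heq.trans hc (heq.symm hT))
      · exact Or.inr (heq.trans hc (heq.symm hB))
    · rcases hall c with hc | hc
      · exact Or.inr (heq.trans hc (heq.symm hB))
      · exact Or.inl (heq.trans hc (heq.symm hT))
    · exact absurd (heq.trans hT (heq.symm hB)) hnTB
  have hcomp : ∀ c : A, θ (star c ⊔ c) ⊤ := by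
    intro c
    rcases hclass c with hc | hc
    · have : θ (star c ⊔ c) (star c ⊔ ⊤) := hj _ _ _ _ (heq.refl _) hc
      simpa using this
    · have hsc : θ (star c) ⊤ := by
        have := hs _ _ hc
        rwa [star_bot] at this
      have : θ (star c ⊔ c) (⊤ ⊔ c) := hj _ _ _ _ hsc (heq.refl _)
      simpa using this
  constructor
  · constructor
    · intro h
      have h1 : θ (star a ⊓ star b) (star a) := by
        have := hm _ _ _ _ (heq.refl (star a)) (hs _ _ (heq.symm h))
        simpa using this
      have h2' : θ (a ⊓ b) a := by
        have := hm _ _ _ _ (heq.refl a) (heq.symm h)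
        simpa using this
      exact heq.trans (hj _ _ _ _ h1 h2') (hcomp a)
    · intro h
      rcases hclass a with ha | ha <;> rcases hclass b with hb | hb
      · exact heq.trans ha (heq.symm hb)
      · exfalso
        have hsa : θ (star a) ⊥ := by
          have := hs _ _ ha; rwa [star_top] at this
        have h1 : θ (star a ⊓ star b) ⊥ := by
          have := hm _ _ _ _ hsa (heq.refl (star b)); simpa using this
        have h2' : θ (a ⊓ b) ⊥ := by
          have := hm _ _ _ _ (heq.refl a) hb; simpa using this
        have : θ ((star a ⊓ star b) ⊔ (a ⊓ b)) ⊥ := by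
          have := hj _ _ _ _ h1 h2'; simpa using this
        exact hnTB (heq.trans (heq.symm h) this)
      · exfalso
        have hsb : θ (star b) ⊥ := by
          have := hs _ _ hb; rwa [star_top] at this
        have h1 : θ (star a ⊓ star b) ⊥ := by
          have := hm _ _ _ _ (heq.refl (star a)) hsb; simpa using this
        have h2' : θ (a ⊓ b) ⊥ := by
          have := hm _ _ _ _ ha (heq.refl b); simpa using this
        have : θ ((star a ⊓ star b) ⊔ (a ⊓ b)) ⊥ := by
          have := hj _ _ _ _ h1 h2'; simpa using this
        exact hnTB (heq.trans (heq.symm h) this)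
      · exact heq.trans ha (heq.symm hb)
  · constructor
    · intro h
      have h1 : θ (a ⊔ b) a := by
        have := hj _ _ _ _ (heq.refl a) (heq.symm h)
        simpa using this
      have h2' : θ (star (a ⊓ b)) (star a) := by
        apply hs
        have := hm _ _ _ _ (heq.refl a) (heq.symm h)
        simpa using this
      have := hm _ _ _ _ h1 h2'
      rwa [meet_star a] at this
    · intro h
      rcases hclass a with ha | ha <;> rcases hclass b with hb | hb
      · exact heq.trans ha (heq.symm hb)
      · exfalso
        have h1 : θ (a ⊔ b) ⊤ := by
          have := hj _ _ _ _ ha hb; simpa using this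
        have h2' : θ (star (a ⊓ b)) ⊤ := by
          have hab : θ (a ⊓ b) ⊥ := by
            have := hm _ _ _ _ (heq.refl a) hb; simpa using this
          have := hs _ _ hab; rwa [star_bot] at this
        have : θ ((a ⊔ b) ⊓ star (a ⊓ b)) ⊤ := by
          have := hm _ _ _ _ h1 h2'; simpa using this
        exact hnTB (heq.trans (heq.symm this) h)
      · exfalso
        have h1 : θ (a ⊔ b) ⊤ := by
          have := hj _ _ _ _ ha hb; simpa using this
        have h2' : θ (star (a ⊓ b)) ⊤ := by
          have hab : θ (a ⊓ b) ⊥ := by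
            have := hm _ _ _ _ ha (heq.refl b); simpa using this
          have := hs _ _ hab; rwa [star_bot] at this
        have : θ ((a ⊔ b) ⊓ star (a ⊓ b)) ⊤ := by
          have := hm _ _ _ _ h1 h2'; simpa using this
        exact hnTB (heq.trans (heq.symm this) h)
      · exact heq.trans ha (heq.symm hb)

/-- If a congruence `φ` of a p-algebra is an intersection of congruences each having
exactly two classes, then `a φ b` iff `((a* ⊓ b*) ⊔ (a ⊓ b)) φ ⊤` iff
`((a ⊔ b) ⊓ (a ⊓ b)*) φ ⊥`. -/
theorem stmt5 [DistribLattice A] [BoundedOrder A] (star : A → A)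
    (hp : ∀ x y : A, x ⊓ y = ⊥ ↔ x ≤ star y)
    (S : Set (A → A → Prop))
    (hS : ∀ θ ∈ S, IsPCong star θ ∧ HasTwoClasses θ)
    (φ : A → A → Prop) (hφ : φ = fun a b => ∀ θ ∈ S, θ a b) (a b : A) :
    (φ a b ↔ φ ((star a ⊓ star b) ⊔ (a ⊓ b)) ⊤) ∧
    (φ a b ↔ φ ((a ⊔ b) ⊓ star (a ⊓ b)) ⊥) := by
  subst hφ
  constructor
  · constructor
    · intro h θ hθS
      exact ((two_class_iff star hp θ (hS θ hθS).1 (hS θ hθS).2 a b).1).mp (h θ hθS)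
    · intro h θ hθS
      exact ((two_class_iff star hp θ (hS θ hθS).1 (hS θ hθS).2 a b).1).mpr (h θ hθS)
  · constructor
    · intro h θ hθS
      exact ((two_class_iff star hp θ (hS θ hθS).1 (hS θ hθS).2 a b).2).mp (h θ hθS)
    · intro h θ hθS
      exact ((two_class_iff star hp θ (hS θ hθS).1 (hS θ hθS).2 a b).2).mpr (h θ hθS)
end

section
/- Let A be a p-algebra and let μ, ν be completely meet-irreducible congruences on A. If the ⊤-class of μ equals the ⊤-class of ν (that is, {a : a μ ⊤} = {a : a ν ⊤}), then μ = ν. -/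
variable {A : Type*}

section PAlg
variable [DistribLattice A] [BoundedOrder A] (star : A → A)
variable (hp : ∀ x y : A, x ⊓ y = ⊥ ↔ x ≤ star y)

include hp

lemma pa_inf_star (x : A) : x ⊓ star x = ⊥ := by
  rw [inf_comm]; exact (hp _ _).mpr le_rfl

lemma pa_star_bot : star (⊥ : A) = ⊤ :=
  le_antisymm le_top ((hp ⊤ ⊥).mp (by simp))

lemma pa_star_anti {x y : A} (hxy : x ≤ y) : star y ≤ star x := by
  apply (hp _ _).mp
  apply le_bot_iff.mp
  calc star y ⊓ x ≤ star y ⊓ y := inf_le_inf_left _ hxy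
    _ = ⊥ := by rw [inf_comm]; exact pa_inf_star star hp y

lemma pa_le_star_star (x : A) : x ≤ star (star x) :=
  (hp _ _).mp (pa_inf_star star hp x)

lemma pa_star_star_star (x : A) : star (star (star x)) = star x :=
  le_antisymm (pa_star_anti star hp (pa_le_star_star star hp x))
    (pa_le_star_star star hp (star x))

/-- `u* ⊓ x = (u ⊓ x)* ⊓ x`. -/
lemma pa_key1 (u x : A) : star u ⊓ x = star (u ⊓ x) ⊓ x := by
  apply le_antisymm
  · exact inf_le_inf_right x (pa_star_anti star hp inf_le_left)
  · have h : (star (u ⊓ x) ⊓ x) ⊓ u = ⊥ := by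
      calc (star (u ⊓ x) ⊓ x) ⊓ u = (u ⊓ x) ⊓ star (u ⊓ x) := by
            rw [inf_assoc, inf_comm x u, inf_comm]
        _ = ⊥ := pa_inf_star star hp _
    exact le_inf ((hp _ _).mp h) inf_le_right

/-- `x* ⊓ (y ⊓ x*)* ≤ y*`. -/
lemma pa_key2 (x y : A) : star x ⊓ star (y ⊓ star x) ≤ star y := by
  apply (hp _ _).mp
  have h : (star x ⊓ star (y ⊓ star x)) ⊓ y = (y ⊓ star x) ⊓ star (y ⊓ star x) := by
    rw [inf_comm (star x) (star (y ⊓ star x)), inf_assoc, inf_comm (star x) y, inf_comm]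
  rw [h]
  exact pa_inf_star star hp _

/-- `(a ⊓ b)* = (a** ⊓ b**)*`. -/
lemma pa_star_inf (a b : A) :
    star (a ⊓ b) = star (star (star a) ⊓ star (star b)) := by
  apply le_antisymm
  · apply (hp _ _).mp
    set z := star (a ⊓ b) with hz
    have h1 : (z ⊓ a) ⊓ b = ⊥ := by
      rw [inf_assoc, inf_comm]; exact pa_inf_star star hp _
    have h2 : z ⊓ a ≤ star b := (hp _ _).mp h1
    have h3 : (z ⊓ star (star b)) ⊓ a = ⊥ := by
      apply le_bot_iff.mp
      calc (z ⊓ star (star b)) ⊓ a = (z ⊓ a) ⊓ star (star b) := by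
            rw [inf_right_comm]
        _ ≤ star b ⊓ star (star b) := inf_le_inf_right _ h2
        _ = ⊥ := (pa_inf_star star hp _)
    have h4 : z ⊓ star (star b) ≤ star a := (hp _ _).mp h3
    apply le_bot_iff.mp
    calc z ⊓ (star (star a) ⊓ star (star b))
        = (z ⊓ star (star b)) ⊓ star (star a) := by
          rw [inf_comm (star (star a)) (star (star b)), inf_assoc]
      _ ≤ star a ⊓ star (star a) := inf_le_inf_right _ h4
      _ = ⊥ := pa_inf_star star hp _
  · exact pa_star_anti star hp (inf_le_inf (pa_le_star_star star hp a) (pa_le_star_star star hp b))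

end PAlg

set_option linter.unusedSectionVars false

section Cong
variable [DistribLattice A] [BoundedOrder A] {star : A → A}
variable (hp : ∀ x y : A, x ⊓ y = ⊥ ↔ x ≤ star y)
variable {μ : A → A → Prop} (hc : IsPCong star μ)

include hc

lemma mu_refl (a : A) : μ a a := hc.1.refl a

lemma mu_symm {a b : A} (h : μ a b) : μ b a := hc.1.symm h

lemma mu_trans {a b c : A} (h1 : μ a b) (h2 : μ b c) : μ a c := hc.1.trans h1 h2

lemma mu_inf {a b c d : A} (h1 : μ a b) (h2 : μ c d) : μ (a ⊓ c) (b ⊓ d) :=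
  hc.2.1 a b c d h1 h2

lemma mu_sup {a b c d : A} (h1 : μ a b) (h2 : μ c d) : μ (a ⊔ c) (b ⊔ d) :=
  hc.2.2.1 a b c d h1 h2

lemma mu_star {a b : A} (h : μ a b) : μ (star a) (star b) := hc.2.2.2 a b h

include hp

/-- If `z* μ ⊤` then `z μ ⊥`. -/
lemma mu_bot_of_star_top {z : A} (h : μ (star z) ⊤) : μ z ⊥ := by
  have h1 : μ (z ⊓ star z) (z ⊓ ⊤) := mu_inf hc (mu_refl hc z) h
  rw [pa_inf_star star hp, inf_top_eq] at h1
  exact mu_symm hc h1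

/-- If `z μ ⊥` then `z* μ ⊤`. -/
lemma mu_star_top_of_bot {z : A} (h : μ z ⊥) : μ (star z) ⊤ := by
  have := mu_star hc h
  rwa [pa_star_bot star hp] at this

/-- mod-μ antisymmetry: `p μ q'` with `q' ≤ q`, `q μ p'` with `p' ≤ p` imply `p μ q`. -/
lemma mu_antisymm {p q p' q' : A} (h1 : μ p q') (hq : q' ≤ q)
    (h2 : μ q p') (hpp : p' ≤ p) : μ p q := by
  have e1 : μ (p ⊓ q) (q' ⊓ q) := mu_inf hc h1 (mu_refl hc q)
  rw [inf_eq_left.mpr hq] at e1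
  have e2 : μ (p ⊓ q) (p ⊓ p') := mu_inf hc (mu_refl hc p) h2
  rw [inf_eq_right.mpr hpp] at e2
  have f1 : μ (p ⊓ q) p := mu_trans hc e1 (mu_symm hc h1)
  have f2 : μ (p ⊓ q) q := mu_trans hc e2 (mu_symm hc h2)
  exact mu_trans hc (mu_symm hc f1) f2

/-- Ordered version: if `w ≤ u`, `w ⊓ x μ u ⊓ x` and `w ⊔ y μ u ⊔ y` where `x ≤ y`
and `x* μ y*`, then `w* μ u*`. -/
lemma mu_star_ordered {x y w u : A} (hxy : x ≤ y) (hsxy : μ (star x) (star y))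
    (hwu : w ≤ u) (hinf : μ (w ⊓ x) (u ⊓ x)) (hsup : μ (w ⊔ y) (u ⊔ y)) :
    μ (star w) (star u) := by
  have hbotw : star w ⊓ w = ⊥ := by rw [inf_comm]; exact pa_inf_star star hp w
  -- step 1 : u μ w ⊔ (u ⊓ y)
  have h1 : μ u (w ⊔ (u ⊓ y)) := by
    have e : μ (u ⊓ (u ⊔ y)) (u ⊓ (w ⊔ y)) := mu_inf hc (mu_refl hc u) (mu_symm hc hsup)
    rw [inf_sup_self, inf_sup_left, inf_eq_right.mpr hwu] at e
    exact e
  set t := star w ⊓ (u ⊓ y) with ht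
  -- step 2 : star w ⊓ u μ t
  have h2 : μ (star w ⊓ u) t := by
    have e : μ (star w ⊓ u) (star w ⊓ (w ⊔ (u ⊓ y))) := mu_inf hc (mu_refl hc _) h1
    rw [inf_sup_left, hbotw, bot_sup_eq] at e
    exact e
  -- step 3 : t ⊓ x μ ⊥
  have h3 : μ (t ⊓ x) ⊥ := by
    have e0 : t ⊓ x = star w ⊓ (u ⊓ x) := by
      rw [ht, inf_assoc, inf_assoc, inf_eq_right.mpr hxy]
    have e : μ (star w ⊓ (u ⊓ x)) (star w ⊓ (w ⊓ x)) := mu_inf hc (mu_refl hc _) (mu_symm hc hinf)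
    rw [show star w ⊓ (w ⊓ x) = ⊥ from by rw [← inf_assoc, hbotw, bot_inf_eq]] at e
    rw [e0]; exact e
  set s := t ⊓ star (t ⊓ x) with hs
  -- step 4 : t μ s
  have h4 : μ t s := by
    have e : μ (t ⊓ ⊤) (t ⊓ star (t ⊓ x)) :=
      mu_inf hc (mu_refl hc t) (mu_symm hc (mu_star_top_of_bot hp hc h3))
    rwa [inf_top_eq] at e
  -- step 5 : s ≤ star x
  have h5 : s ≤ star x := by
    apply (hp _ _).mp
    rw [hs, inf_right_comm]
    exact pa_inf_star star hp _
  -- step 6 : s μ s ⊓ star y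
  have h6 : μ s (s ⊓ star y) := by
    have e : μ (s ⊓ star x) (s ⊓ star y) := mu_inf hc (mu_refl hc s) hsxy
    rwa [inf_eq_left.mpr h5] at e
  -- step 7 : s ⊓ star y = ⊥
  have h7 : s ⊓ star y = ⊥ := by
    apply le_bot_iff.mp
    calc s ⊓ star y ≤ y ⊓ star y :=
          inf_le_inf_right _ (le_trans inf_le_left (le_trans inf_le_right inf_le_right))
      _ = ⊥ := pa_inf_star star hp y
  -- step 8: star w ⊓ u μ ⊥
  have h8 : μ (star w ⊓ u) ⊥ :=
    mu_trans hc h2 (mu_trans hc h4 (h7 ▸ h6))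
  -- wrap up
  have h9 : μ (star (star w ⊓ u)) ⊤ := mu_star_top_of_bot hp hc h8
  have h10 : μ (star w) (star w ⊓ star (star w ⊓ u)) := by
    have e : μ (star w ⊓ ⊤) (star w ⊓ star (star w ⊓ u)) :=
      mu_inf hc (mu_refl hc _) (mu_symm hc h9)
    rwa [inf_top_eq] at e
  have h11 : star w ⊓ star (star w ⊓ u) ≤ star u := by
    rw [inf_comm (star w) u]
    exact pa_key2 star hp w u
  exact mu_antisymm hp hc h10 h11 (mu_refl hc (star u)) (pa_star_anti star hp hwu)

/-- Unordered version. -/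
lemma mu_star_pair {x y u v : A} (hxy : x ≤ y) (hsxy : μ (star x) (star y))
    (hinf : μ (u ⊓ x) (v ⊓ x)) (hsup : μ (u ⊔ y) (v ⊔ y)) :
    μ (star u) (star v) := by
  have hwx_u : μ ((u ⊓ v) ⊓ x) (u ⊓ x) := by
    have e : μ ((u ⊓ x) ⊓ (v ⊓ x)) ((u ⊓ x) ⊓ (u ⊓ x)) :=
      mu_inf hc (mu_refl hc _) (mu_symm hc hinf)
    rw [inf_idem, ← inf_inf_distrib_right] at e
    exact e
  have hwy_u : μ ((u ⊓ v) ⊔ y) (u ⊔ y) := by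
    have e : μ ((u ⊔ y) ⊓ (v ⊔ y)) ((u ⊔ y) ⊓ (u ⊔ y)) :=
      mu_inf hc (mu_refl hc _) (mu_symm hc hsup)
    rw [inf_idem, ← sup_inf_right] at e
    exact e
  have hwx_v : μ ((u ⊓ v) ⊓ x) (v ⊓ x) := mu_trans hc hwx_u hinf
  have hwy_v : μ ((u ⊓ v) ⊔ y) (v ⊔ y) := mu_trans hc hwy_u hsup
  have s1 : μ (star (u ⊓ v)) (star u) :=
    mu_star_ordered hp hc hxy hsxy inf_le_left hwx_u hwy_u
  have s2 : μ (star (u ⊓ v)) (star v) :=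
    mu_star_ordered hp hc hxy hsxy inf_le_right hwx_v hwy_v
  exact mu_trans hc (mu_symm hc s1) s2

end Cong

section Core
variable [DistribLattice A] [BoundedOrder A] {star : A → A}
variable (hp : ∀ x y : A, x ⊓ y = ⊥ ↔ x ≤ star y)
variable {μ : A → A → Prop}

include hp

/-- Core lemma: if `μ` is CMI, `x ≤ y`, `x* μ y*` and `y` is not in the `⊤`-class,
then `x μ y`. -/
lemma mu_core (hcmi : IsCMI star μ) {x y : A} (hxy : x ≤ y)
    (hsxy : μ (star x) (star y)) (hyT : ¬ μ y ⊤) : μ x y := by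
  have hc : IsPCong star μ := hcmi.1
  by_contra hxyn
  set θ₁ : A → A → Prop := fun u v => μ (u ⊓ x) (v ⊓ x) ∧ μ (u ⊔ y) (v ⊔ y) with hθ₁def
  set θ₂ : A → A → Prop := fun u v => μ (u ⊓ y) (v ⊓ y) with hθ₂def
  have hθ₁ : IsPCong star θ₁ := by
    refine ⟨⟨fun a => ⟨mu_refl hc _, mu_refl hc _⟩,
      fun h => ⟨mu_symm hc h.1, mu_symm hc h.2⟩,
      fun h g => ⟨mu_trans hc h.1 g.1, mu_trans hc h.2 g.2⟩⟩, ?_, ?_, ?_⟩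
    · rintro a b c d ⟨h1, h2⟩ ⟨h3, h4⟩
      constructor
      · have e : μ ((a ⊓ x) ⊓ (c ⊓ x)) ((b ⊓ x) ⊓ (d ⊓ x)) := mu_inf hc h1 h3
        rwa [← inf_inf_distrib_right, ← inf_inf_distrib_right] at e
      · have e : μ ((a ⊔ y) ⊓ (c ⊔ y)) ((b ⊔ y) ⊓ (d ⊔ y)) := mu_inf hc h2 h4
        rwa [← sup_inf_right, ← sup_inf_right] at e
    · rintro a b c d ⟨h1, h2⟩ ⟨h3, h4⟩
      constructor
      · have e : μ ((a ⊓ x) ⊔ (c ⊓ x)) ((b ⊓ x) ⊔ (d ⊓ x)) := mu_sup hc h1 h3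
        rwa [← inf_sup_right, ← inf_sup_right] at e
      · have e : μ ((a ⊔ y) ⊔ (c ⊔ y)) ((b ⊔ y) ⊔ (d ⊔ y)) := mu_sup hc h2 h4
        rwa [← sup_sup_distrib_right, ← sup_sup_distrib_right] at e
    · rintro a b ⟨h1, h2⟩
      have hs : μ (star a) (star b) := mu_star_pair hp hc hxy hsxy h1 h2
      exact ⟨mu_inf hc hs (mu_refl hc x), mu_sup hc hs (mu_refl hc y)⟩
  have hθ₂ : IsPCong star θ₂ := by
    refine ⟨⟨fun a => mu_refl hc _, fun h => mu_symm hc h,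
      fun h g => mu_trans hc h g⟩, ?_, ?_, ?_⟩
    · intro a b c d h1 h3
      have e : μ ((a ⊓ y) ⊓ (c ⊓ y)) ((b ⊓ y) ⊓ (d ⊓ y)) := mu_inf hc h1 h3
      rwa [← inf_inf_distrib_right, ← inf_inf_distrib_right] at e
    · intro a b c d h1 h3
      have e : μ ((a ⊓ y) ⊔ (c ⊓ y)) ((b ⊓ y) ⊔ (d ⊓ y)) := mu_sup hc h1 h3
      rwa [← inf_sup_right, ← inf_sup_right] at e
    · intro a b h1
      have e : μ (star (a ⊓ y) ⊓ y) (star (b ⊓ y) ⊓ y) := mu_inf hc (mu_star hc h1) (mu_refl hc y)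
      show μ (star a ⊓ y) (star b ⊓ y)
      rwa [pa_key1 star hp a y, pa_key1 star hp b y]
  have hsub1 : ∀ {u v : A}, μ u v → θ₁ u v :=
    fun h => ⟨mu_inf hc h (mu_refl hc x), mu_sup hc h (mu_refl hc y)⟩
  have hsub2 : ∀ {u v : A}, μ u v → θ₂ u v := fun h => mu_inf hc h (mu_refl hc y)
  have hint : μ = fun a b => ∀ θ ∈ ({θ₁, θ₂} : Set (A → A → Prop)), θ a b := by
    funext a b
    apply propext
    constructor
    · intro hab θ hθ
      rcases hθ with rfl | rfl
      · exact hsub1 hab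
      · exact hsub2 hab
    · intro hall
      have g1 : θ₁ a b := hall θ₁ (Set.mem_insert _ _)
      have g2 : θ₂ a b := hall θ₂ (Set.mem_insert_of_mem _ rfl)
      -- cancellation in a distributive lattice, mod μ
      have c1 : μ a (a ⊓ (b ⊔ y)) := by
        have e : μ (a ⊓ (a ⊔ y)) (a ⊓ (b ⊔ y)) := mu_inf hc (mu_refl hc a) g1.2
        rwa [inf_sup_self] at e
      have c2 : μ (a ⊓ (b ⊔ y)) ((a ⊓ b) ⊔ (b ⊓ y)) := by
        have e : μ ((a ⊓ b) ⊔ (a ⊓ y)) ((a ⊓ b) ⊔ (b ⊓ y)) := mu_sup hc (mu_refl hc _) g2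
        rwa [← inf_sup_left] at e
      have c3 : μ ((a ⊓ b) ⊔ (b ⊓ y)) b := by
        have e : μ (b ⊓ (a ⊔ y)) (b ⊓ (b ⊔ y)) := mu_inf hc (mu_refl hc b) g1.2
        rw [inf_sup_self] at e
        rw [show (a ⊓ b) ⊔ (b ⊓ y) = b ⊓ (a ⊔ y) from by rw [inf_sup_left, inf_comm a b]]
        exact e
      exact mu_trans hc c1 (mu_trans hc c2 c3)
  have hmem := hcmi.2 {θ₁, θ₂} (by rintro θ (rfl | rfl); exacts [hθ₁, hθ₂]) hint
  rcases hmem with heq | heq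
  · apply hxyn
    rw [heq]
    show θ₁ x y
    constructor
    · rw [inf_idem, inf_comm y x, inf_eq_left.mpr hxy]
      exact mu_refl hc x
    · rw [sup_eq_right.mpr hxy, sup_idem]
      exact mu_refl hc y
  · apply hyT
    rw [heq]
    show μ (y ⊓ y) (⊤ ⊓ y)
    rw [inf_idem, top_inf_eq]
    exact mu_refl hc y

/-- Characterization of a CMI congruence by its `⊤`-class. -/
lemma mu_char (hcmi : IsCMI star μ) (a b : A) :
    μ a b ↔ ((μ a ⊤ ↔ μ b ⊤) ∧ μ (star (a ⊓ star b)) ⊤ ∧ μ (star (b ⊓ star a)) ⊤) := by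
  have hc : IsPCong star μ := hcmi.1
  constructor
  · intro h
    refine ⟨⟨fun h' => mu_trans hc (mu_symm hc h) h', fun h' => mu_trans hc h h'⟩, ?_, ?_⟩
    · have e : μ (a ⊓ star b) (b ⊓ star b) := mu_inf hc h (mu_refl hc _)
      rw [pa_inf_star star hp] at e
      exact mu_star_top_of_bot hp hc e
    · have e : μ (b ⊓ star a) (a ⊓ star a) := mu_inf hc (mu_symm hc h) (mu_refl hc _)
      rw [pa_inf_star star hp] at e
      exact mu_star_top_of_bot hp hc e
  · rintro ⟨hT, h1, h2⟩
    -- first: a* μ b*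
    have r1 : μ (star a) (star a ⊓ star (b ⊓ star a)) := by
      have e : μ (star a ⊓ ⊤) (star a ⊓ star (b ⊓ star a)) :=
        mu_inf hc (mu_refl hc _) (mu_symm hc h2)
      rwa [inf_top_eq] at e
    have r2 : μ (star b) (star b ⊓ star (a ⊓ star b)) := by
      have e : μ (star b ⊓ ⊤) (star b ⊓ star (a ⊓ star b)) :=
        mu_inf hc (mu_refl hc _) (mu_symm hc h1)
      rwa [inf_top_eq] at e
    have hsab : μ (star a) (star b) :=
      mu_antisymm hp hc r1 (pa_key2 star hp a b) r2 (pa_key2 star hp b a)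
    by_cases hb : μ b ⊤
    · exact mu_trans hc (hT.mpr hb) (mu_symm hc hb)
    · have ha : ¬ μ a ⊤ := fun h' => hb (hT.mp h')
      have hss : μ (star (star a)) (star (star b)) := mu_star hc hsab
      have hsc : μ (star (a ⊓ b)) (star a) := by
        rw [pa_star_inf star hp a b]
        have e : μ (star (star (star a) ⊓ star (star b))) (star (star (star a) ⊓ star (star a))) :=
          mu_star hc (mu_inf hc (mu_refl hc _) (mu_symm hc hss))
        rwa [inf_idem, pa_star_star_star star hp] at e
      have m1 : μ (a ⊓ b) a := mu_core hp hcmi inf_le_left hsc ha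
      have m2 : μ (a ⊓ b) b := mu_core hp hcmi inf_le_right (mu_trans hc hsc hsab) hb
      exact mu_trans hc (mu_symm hc m1) m2

end Core

/-- Completely meet-irreducible congruences of a p-algebra are determined by their
`⊤`-classes. -/
theorem stmt6 [DistribLattice A] [BoundedOrder A] (star : A → A)
    (hp : ∀ x y : A, x ⊓ y = ⊥ ↔ x ≤ star y)
    (μ ν : A → A → Prop) (hμ : IsCMI star μ) (hν : IsCMI star ν)
    (h : {a : A | μ a ⊤} = {a : A | ν a ⊤}) :
    μ = ν := by
  have hT : ∀ z : A, μ z ⊤ ↔ ν z ⊤ := fun z => Set.ext_iff.mp h z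
  funext a b
  apply propext
  rw [mu_char hp hμ a b, mu_char hp hν a b]
  constructor
  · rintro ⟨h1, h2, h3⟩
    exact ⟨(hT a).symm.trans (h1.trans (hT b)), (hT _).mp h2, (hT _).mp h3⟩
  · rintro ⟨h1, h2, h3⟩
    exact ⟨(hT a).trans (h1.trans (hT b).symm), (hT _).mpr h2, (hT _).mpr h3⟩
end

section
/- Let A be a p-algebra and F ⊆ A. Then F is the ⊤-class of some congruence on A having exactly two equivalence classes if and only if F is a prime filter of A such that for every a ∈ A, a** ∈ F implies a ∈ F. -/
variable {A : Type*}

/-- `F ⊆ A` is the `⊤`-class of a congruence with exactly two classes iff `F` is a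
prime filter closed under the rule `a** ∈ F → a ∈ F`. -/
theorem stmt7 [DistribLattice A] [BoundedOrder A] (star : A → A)
    (hp : ∀ x y : A, x ⊓ y = ⊥ ↔ x ≤ star y) (F : Set A) :
    (∃ θ : A → A → Prop, IsPCong star θ ∧ HasTwoClasses θ ∧ F = {a : A | θ a ⊤}) ↔
      (IsPrimeFilter F ∧ ∀ a : A, star (star a) ∈ F → a ∈ F) := by
  -- basic p-algebra facts
  have hmb : ∀ a : A, a ⊓ star a = ⊥ := by
    intro a
    have := (hp (star a) a).mpr le_rfl
    rwa [inf_comm] at this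
  have hbs : star (⊥ : A) = ⊤ :=
    le_antisymm le_top ((hp ⊤ ⊥).mp (by simp))
  have hdense : ∀ a : A, star (a ⊔ star a) = ⊥ := by
    intro a
    have h1 : star (a ⊔ star a) ⊓ (a ⊔ star a) = ⊥ := (hp _ _).mpr le_rfl
    rw [inf_sup_left] at h1
    have h2 : star (a ⊔ star a) ⊓ a = ⊥ := le_antisymm (h1 ▸ le_sup_left) bot_le
    have h3 : star (a ⊔ star a) ⊓ star a = ⊥ := le_antisymm (h1 ▸ le_sup_right) bot_le
    have h4 : star (a ⊔ star a) ≤ star a := (hp _ _).mp h2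
    calc star (a ⊔ star a) = star (a ⊔ star a) ⊓ star a := (inf_eq_left.mpr h4).symm
      _ = ⊥ := h3
  constructor
  · rintro ⟨θ, ⟨heq, hm, hj, hs⟩, ⟨a0, b0, hab, hcl⟩, rfl⟩
    have hbotne : ¬ θ ⊥ ⊤ := by
      intro h
      have hall : ∀ c : A, θ c ⊤ := by
        intro c
        have h1 := hm c c ⊤ ⊥ (heq.refl c) (heq.symm h)
        simp only [inf_top_eq, inf_bot_eq] at h1
        exact heq.trans h1 h
      exact hab (heq.trans (hall a0) (heq.symm (hall b0)))
    have halltb : ∀ c : A, θ c ⊤ ∨ θ c ⊥ := by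
      rcases hcl ⊤ with ht | ht <;> rcases hcl ⊥ with hb | hb <;> intro c <;>
          rcases hcl c with hc | hc
      · exact Or.inl (heq.trans hc (heq.symm ht))
      · exact absurd (heq.trans hb (heq.symm ht)) hbotne
      · exact Or.inl (heq.trans hc (heq.symm ht))
      · exact Or.inr (heq.trans hc (heq.symm hb))
      · exact Or.inr (heq.trans hc (heq.symm hb))
      · exact Or.inl (heq.trans hc (heq.symm ht))
      · exact absurd (heq.trans hb (heq.symm ht)) hbotne
      · exact Or.inl (heq.trans hc (heq.symm ht))
    have htop : θ ⊤ ⊤ := heq.refl ⊤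
    have hup : ∀ a b : A, θ a ⊤ → a ≤ b → θ b ⊤ := by
      intro a b ha hle
      have h1 := hj a ⊤ b b ha (heq.refl b)
      rwa [sup_eq_right.mpr hle, top_sup_eq] at h1
    have hbotnot : ¬ θ (⊥ : A) ⊤ := hbotne
    refine ⟨⟨⟨⊤, htop⟩, ?_, ?_, ?_, ?_⟩, ?_⟩
    · intro h
      have : (⊥ : A) ∈ {a : A | θ a ⊤} := h.symm ▸ Set.mem_univ (⊥ : A)
      exact hbotnot this
    · exact hup
    · intro a b ha hb
      have := hm a ⊤ b ⊤ ha hb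
      rwa [top_inf_eq] at this
    · intro a b h
      by_contra hcon
      push_neg at hcon
      obtain ⟨ha, hb⟩ := hcon
      have ha' : θ a ⊥ := (halltb a).resolve_left ha
      have hb' : θ b ⊥ := (halltb b).resolve_left hb
      have := hj a ⊥ b ⊥ ha' hb'
      rw [sup_idem] at this
      exact hbotne (heq.trans (heq.symm this) h)
    · intro a h
      by_contra hna
      have ha' : θ a ⊥ := (halltb a).resolve_left hna
      have hsa : θ (star a) ⊤ := by
        have := hs a ⊥ ha'
        rwa [hbs] at this
      have := hm (star a) ⊤ (star (star a)) ⊤ hsa h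
      rw [top_inf_eq] at this
      rw [hmb (star a)] at this
      exact hbotne this
  · rintro ⟨⟨⟨x0, hx0⟩, hproper, hup, hmeet, hprime⟩, hstar2⟩
    have htopF : (⊤ : A) ∈ F := hup x0 ⊤ hx0 le_top
    have hbotF : (⊥ : A) ∉ F := by
      intro h
      exact hproper (Set.eq_univ_of_forall fun a => hup ⊥ a h bot_le)
    have hstarF : ∀ a : A, a ∉ F → star a ∈ F := by
      intro a ha
      have hsum : a ⊔ star a ∈ F := by
        apply hstar2
        rw [hdense a, hbs]
        exact htopF
      exact (hprime a (star a) hsum).resolve_left ha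
    have hstarF' : ∀ a : A, a ∈ F → star a ∉ F := by
      intro a ha hsa
      exact hbotF (hmb a ▸ hmeet a (star a) ha hsa)
    refine ⟨fun a b => (a ∈ F ↔ b ∈ F), ⟨⟨fun a => Iff.rfl, fun h => h.symm,
      fun h1 h2 => h1.trans h2⟩, ?_, ?_, ?_⟩, ⟨⊤, ⊥, ?_, ?_⟩, ?_⟩
    · intro a b c d hab hcd
      have key : ∀ x y : A, x ⊓ y ∈ F ↔ (x ∈ F ∧ y ∈ F) := by
        intro x y
        exact ⟨fun h => ⟨hup _ _ h inf_le_left, hup _ _ h inf_le_right⟩,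
          fun ⟨h1, h2⟩ => hmeet x y h1 h2⟩
      rw [key, key, hab, hcd]
    · intro a b c d hab hcd
      have key : ∀ x y : A, x ⊔ y ∈ F ↔ (x ∈ F ∨ y ∈ F) := by
        intro x y
        exact ⟨hprime x y, fun h => h.elim (fun h1 => hup _ _ h1 le_sup_left)
          (fun h2 => hup _ _ h2 le_sup_right)⟩
      rw [key, key, hab, hcd]
    · intro a b hab
      constructor
      · intro hsa
        by_contra hsb
        have hb : b ∈ F := by
          by_contra hb
          exact hsb (hstarF b hb)
        exact hstarF' a (hab.mpr hb) hsa
      · intro hsb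
        by_contra hsa
        have ha : a ∈ F := by
          by_contra ha
          exact hsa (hstarF a ha)
        exact hstarF' b (hab.mp ha) hsb
    · simp only [htopF, hbotF]
      tauto
    · intro c
      by_cases hc : c ∈ F
      · exact Or.inl (by simp [hc, htopF])
      · exact Or.inr (by simp [hc, hbotF])
    · ext a
      simp [Set.mem_setOf_eq, htopF]
end

section
/- Let A be a p-algebra. The map sending a completely meet-irreducible congruence μ on A to its ⊤-class {a ∈ A : a μ ⊤} is a bijection from the set of completely meet-irreducible congruences on A onto the set of prime filters of A. -/
set_option linter.unusedSectionVars false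


variable {A : Type*}

section PAlg

variable [DistribLattice A] [BoundedOrder A] {s : A → A}

/-! ### Basic pseudocomplement lemmas -/

section basic
variable (hp : ∀ x y : A, x ⊓ y = ⊥ ↔ x ≤ s y)
include hp

lemma inf_s_self (a : A) : a ⊓ s a = ⊥ := by
  have h := (hp (s a) a).mpr le_rfl
  rwa [inf_comm] at h

lemma le_ss (a : A) : a ≤ s (s a) := (hp a (s a)).mp (inf_s_self hp a)

lemma s_bot : s (⊥ : A) = ⊤ := le_antisymm le_top ((hp ⊤ ⊥).mp (inf_bot_eq _))

lemma s_top : s (⊤ : A) = ⊥ := by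
  have h := inf_s_self hp (⊤ : A); rwa [top_inf_eq] at h

lemma bot_of {u x : A} (h1 : u ≤ x) (h2 : u ≤ s x) : u = ⊥ :=
  le_bot_iff.mp ((le_inf h1 h2).trans_eq (inf_s_self hp x))

lemma le_s_of {u x : A} (h : u ⊓ x = ⊥) : u ≤ s x := (hp u x).mp h

lemma inf_eq_bot' {u x : A} (h : u ≤ s x) : u ⊓ x = ⊥ := (hp u x).mpr h

/-! ### The basic `= ⊥` computations -/

lemma L_trans (a b c : A) : s (a ⊓ s b) ⊓ s (b ⊓ s c) ⊓ (a ⊓ s c) = ⊥ := by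
  set u := s (a ⊓ s b) ⊓ s (b ⊓ s c) ⊓ (a ⊓ s c) with hu
  have hua : u ≤ a := inf_le_right.trans inf_le_left
  have huc : u ≤ s c := inf_le_right.trans inf_le_right
  have hu1 : u ≤ s (a ⊓ s b) := inf_le_left.trans inf_le_left
  have hu2 : u ≤ s (b ⊓ s c) := inf_le_left.trans inf_le_right
  have h1 : u ⊓ s b = ⊥ :=
    bot_of hp (le_inf (inf_le_left.trans hua) inf_le_right) (inf_le_left.trans hu1)
  have hssb : u ≤ s (s b) := le_s_of hp h1
  have h2 : u ⊓ b = ⊥ :=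
    bot_of hp (le_inf inf_le_right (inf_le_left.trans huc)) (inf_le_left.trans hu2)
  exact bot_of hp (le_s_of hp h2) hssb

lemma L_meet (a b c d : A) :
    s (a ⊓ s b) ⊓ s (c ⊓ s d) ⊓ (a ⊓ c ⊓ s (b ⊓ d)) = ⊥ := by
  set u := s (a ⊓ s b) ⊓ s (c ⊓ s d) ⊓ (a ⊓ c ⊓ s (b ⊓ d)) with hu
  have hua : u ≤ a := inf_le_right.trans (inf_le_left.trans inf_le_left)
  have huc : u ≤ c := inf_le_right.trans (inf_le_left.trans inf_le_right)
  have hubd : u ≤ s (b ⊓ d) := inf_le_right.trans inf_le_right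
  have hu1 : u ≤ s (a ⊓ s b) := inf_le_left.trans inf_le_left
  have hu2 : u ≤ s (c ⊓ s d) := inf_le_left.trans inf_le_right
  have h1 : u ⊓ s b = ⊥ :=
    bot_of hp (le_inf (inf_le_left.trans hua) inf_le_right) (inf_le_left.trans hu1)
  have hssb : u ≤ s (s b) := le_s_of hp h1
  have h2 : u ⊓ s d = ⊥ :=
    bot_of hp (le_inf (inf_le_left.trans huc) inf_le_right) (inf_le_left.trans hu2)
  have hssd : u ≤ s (s d) := le_s_of hp h2
  have h3 : u ⊓ b ⊓ d = ⊥ := by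
    rw [inf_assoc]; exact inf_eq_bot' hp hubd
  have h4 : u ⊓ b = ⊥ := bot_of hp (le_s_of hp h3) (inf_le_left.trans hssd)
  exact bot_of hp (le_s_of hp h4) hssb

lemma L_join (a b c d : A) :
    s (a ⊓ s b) ⊓ s (c ⊓ s d) ⊓ ((a ⊔ c) ⊓ s (b ⊔ d)) = ⊥ := by
  set u := s (a ⊓ s b) ⊓ s (c ⊓ s d) ⊓ ((a ⊔ c) ⊓ s (b ⊔ d)) with hu
  have huac : u ≤ a ⊔ c := inf_le_right.trans inf_le_left
  have husbd : u ≤ s (b ⊔ d) := inf_le_right.trans inf_le_right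
  have hsb : s (b ⊔ d) ≤ s b := by
    refine le_s_of hp (le_bot_iff.mp ?_)
    calc s (b ⊔ d) ⊓ b ≤ s (b ⊔ d) ⊓ (b ⊔ d) := inf_le_inf_left _ le_sup_left
    _ = ⊥ := by rw [inf_comm]; exact inf_s_self hp _
  have hsd : s (b ⊔ d) ≤ s d := by
    refine le_s_of hp (le_bot_iff.mp ?_)
    calc s (b ⊔ d) ⊓ d ≤ s (b ⊔ d) ⊓ (b ⊔ d) := inf_le_inf_left _ le_sup_right
    _ = ⊥ := by rw [inf_comm]; exact inf_s_self hp _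
  have hu1 : u ≤ s (a ⊓ s b) := inf_le_left.trans inf_le_left
  have hu2 : u ≤ s (c ⊓ s d) := inf_le_left.trans inf_le_right
  have hA : u ⊓ a = ⊥ :=
    bot_of hp (le_inf inf_le_right (inf_le_left.trans (husbd.trans hsb)))
      (inf_le_left.trans hu1)
  have hC : u ⊓ c = ⊥ :=
    bot_of hp (le_inf inf_le_right (inf_le_left.trans (husbd.trans hsd)))
      (inf_le_left.trans hu2)
  calc u = u ⊓ (a ⊔ c) := (inf_eq_left.mpr huac).symm
  _ = u ⊓ a ⊔ u ⊓ c := inf_sup_left u a c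
  _ = ⊥ := by rw [hA, hC, sup_idem]

lemma L_star1 (a b : A) : s a ⊓ s (b ⊓ s a) ⊓ b = ⊥ :=
  bot_of hp (x := b ⊓ s a)
    (le_inf inf_le_right (inf_le_left.trans inf_le_left))
    (inf_le_left.trans inf_le_right)

lemma L_star2 (a b : A) : s (b ⊓ s a) ⊓ (s a ⊓ s (s b)) = ⊥ := by
  set u := s (b ⊓ s a) ⊓ (s a ⊓ s (s b)) with hu
  have h1 : u ⊓ b = ⊥ :=
    bot_of hp (le_inf inf_le_right (inf_le_left.trans (inf_le_right.trans inf_le_left)))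
      (inf_le_left.trans inf_le_left)
  exact bot_of hp (le_s_of hp h1) (inf_le_right.trans inf_le_right)

lemma L_q (d c : A) : d ⊓ s (d ⊓ (c ⊔ s c)) = ⊥ := by
  set u := d ⊓ s (d ⊓ (c ⊔ s c)) with hu
  have h1 : u ⊓ c = ⊥ :=
    bot_of hp (x := d ⊓ (c ⊔ s c))
      (le_inf (inf_le_left.trans inf_le_left) (inf_le_right.trans le_sup_left))
      (inf_le_left.trans inf_le_right)
  have h2 : u ⊓ s c = ⊥ :=
    bot_of hp (x := d ⊓ (c ⊔ s c))
      (le_inf (inf_le_left.trans inf_le_left) (inf_le_right.trans le_sup_right))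
      (inf_le_left.trans inf_le_right)
  exact bot_of hp (le_s_of hp h1) (le_s_of hp h2)

end basic

/-! ### Prime filter helpers -/

section PF
variable {F : Set A} (hF : IsPrimeFilter F)
include hF

lemma PF.up : ∀ a b : A, a ∈ F → a ≤ b → b ∈ F := hF.2.2.1

lemma PF.top : (⊤ : A) ∈ F := by
  obtain ⟨x, hx⟩ := hF.1
  exact hF.2.2.1 x ⊤ hx le_top

lemma PF.nbot : (⊥ : A) ∉ F := fun h =>
  hF.2.1 (Set.eq_univ_of_forall fun a => hF.2.2.1 ⊥ a h bot_le)

lemma PF.inf_mem {a b : A} (ha : a ∈ F) (hb : b ∈ F) : a ⊓ b ∈ F := hF.2.2.2.1 a b ha hb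

lemma PF.inf_iff {a b : A} : a ⊓ b ∈ F ↔ (a ∈ F ∧ b ∈ F) :=
  ⟨fun h => ⟨hF.2.2.1 _ _ h inf_le_left, hF.2.2.1 _ _ h inf_le_right⟩,
    fun h => hF.2.2.2.1 a b h.1 h.2⟩

lemma PF.sup_iff {a b : A} : a ⊔ b ∈ F ↔ (a ∈ F ∨ b ∈ F) :=
  ⟨hF.2.2.2.2 a b, fun h => h.elim (fun h => hF.2.2.1 _ _ h le_sup_left)
    (fun h => hF.2.2.1 _ _ h le_sup_right)⟩

variable (hp : ∀ x y : A, x ⊓ y = ⊥ ↔ x ≤ s y)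
include hp

lemma PF.mem_s {w z : A} (hw : w ∈ F) (h : w ⊓ z = ⊥) : s z ∈ F :=
  hF.2.2.1 w (s z) hw (le_s_of hp h)

end PF

/-! ### The congruence attached to a prime filter -/

def nuRel (s : A → A) (F : Set A) : A → A → Prop := fun a b =>
  (a ∈ F ↔ b ∈ F) ∧ s (a ⊓ s b) ∈ F ∧ s (b ⊓ s a) ∈ F

section nu
variable (hp : ∀ x y : A, x ⊓ y = ⊥ ↔ x ≤ s y) {F : Set A} (hF : IsPrimeFilter F)
include hp hF

lemma nu_refl (a : A) : nuRel s F a a := by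
  refine ⟨Iff.rfl, ?_, ?_⟩ <;>
    · rw [inf_s_self hp, s_bot hp]; exact PF.top hF

lemma nu_symm {a b : A} (h : nuRel s F a b) : nuRel s F b a := ⟨h.1.symm, h.2.2, h.2.1⟩

lemma nu_trans {a b c : A} (h1 : nuRel s F a b) (h2 : nuRel s F b c) : nuRel s F a c := by
  refine ⟨h1.1.trans h2.1, ?_, ?_⟩
  · exact PF.mem_s hF hp (PF.inf_mem hF h1.2.1 h2.2.1) (L_trans hp a b c)
  · exact PF.mem_s hF hp (PF.inf_mem hF h2.2.2 h1.2.2) (L_trans hp c b a)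

lemma nu_meet {a b c d : A} (h1 : nuRel s F a b) (h2 : nuRel s F c d) :
    nuRel s F (a ⊓ c) (b ⊓ d) := by
  refine ⟨(PF.inf_iff hF).trans ((and_congr h1.1 h2.1).trans (PF.inf_iff hF).symm), ?_, ?_⟩
  · exact PF.mem_s hF hp (PF.inf_mem hF h1.2.1 h2.2.1) (L_meet hp a b c d)
  · exact PF.mem_s hF hp (PF.inf_mem hF h1.2.2 h2.2.2) (L_meet hp b a d c)

lemma nu_join {a b c d : A} (h1 : nuRel s F a b) (h2 : nuRel s F c d) :
    nuRel s F (a ⊔ c) (b ⊔ d) := by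
  refine ⟨(PF.sup_iff hF).trans ((or_congr h1.1 h2.1).trans (PF.sup_iff hF).symm), ?_, ?_⟩
  · exact PF.mem_s hF hp (PF.inf_mem hF h1.2.1 h2.2.1) (L_join hp a b c d)
  · exact PF.mem_s hF hp (PF.inf_mem hF h1.2.2 h2.2.2) (L_join hp b a d c)

lemma nu_star {a b : A} (h : nuRel s F a b) : nuRel s F (s a) (s b) := by
  refine ⟨⟨fun hsa => ?_, fun hsb => ?_⟩, ?_, ?_⟩
  · exact PF.up hF _ _ (PF.inf_mem hF hsa h.2.2) (le_s_of hp (L_star1 hp a b))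
  · exact PF.up hF _ _ (PF.inf_mem hF hsb h.2.1) (le_s_of hp (L_star1 hp b a))
  · exact PF.mem_s hF hp h.2.2 (L_star2 hp a b)
  · exact PF.mem_s hF hp h.2.1 (L_star2 hp b a)

lemma nu_pcong : IsPCong s (nuRel s F) :=
  ⟨⟨nu_refl hp hF, fun h => nu_symm hp hF h, nu_trans hp hF⟩,
    fun _ _ _ _ h1 h2 => nu_meet hp hF h1 h2,
    fun _ _ _ _ h1 h2 => nu_join hp hF h1 h2,
    fun _ _ h => nu_star hp hF h⟩

lemma nu_top {a : A} : nuRel s F a ⊤ ↔ a ∈ F := by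
  constructor
  · exact fun h => h.1.mpr (PF.top hF)
  · intro ha
    refine ⟨iff_of_true ha (PF.top hF), ?_, ?_⟩
    · rw [s_top hp, inf_bot_eq, s_bot hp]; exact PF.top hF
    · rw [top_inf_eq]; exact PF.up hF a _ ha (le_ss hp a)

lemma nu_topclass : {a : A | nuRel s F a ⊤} = F :=
  Set.ext fun _ => nu_top hp hF

end nu

/-! ### Generic congruence lemmas -/

section mu
variable (hp : ∀ x y : A, x ⊓ y = ⊥ ↔ x ≤ s y) {μ : A → A → Prop} (hμ : IsPCong s μ)
include hp hμ

lemma mu_inf_bot {a b : A} (h : μ a b) : μ (a ⊓ s b) ⊥ := by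
  have h2 := hμ.2.1 a b (s b) (s b) h (hμ.1.refl _)
  rwa [inf_s_self hp] at h2

lemma mu_s_top {a b : A} (h : μ a b) : μ (s (a ⊓ s b)) ⊤ := by
  have h2 := hμ.2.2.2 _ _ (mu_inf_bot hp hμ h)
  rwa [s_bot hp] at h2

omit hp

lemma pre_refl (u : A) : μ (u ⊓ u) u := by rw [inf_idem]; exact hμ.1.refl u

lemma pre_of_le {u v : A} (h : u ≤ v) : μ (u ⊓ v) u := by
  rw [inf_eq_left.mpr h]; exact hμ.1.refl u

lemma pre_of_mu {u v : A} (h : μ u v) : μ (u ⊓ v) u := by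
  have h2 := hμ.2.1 u v v v h (hμ.1.refl v)
  rw [inf_idem] at h2
  exact hμ.1.trans h2 (hμ.1.symm h)

lemma pre_trans {u v w : A} (h1 : μ (u ⊓ v) u) (h2 : μ (v ⊓ w) v) : μ (u ⊓ w) u := by
  have s1 : μ (v ⊓ u) (v ⊓ w ⊓ u) := hμ.2.1 v (v ⊓ w) u u (hμ.1.symm h2) (hμ.1.refl u)
  have s2 : μ u (v ⊓ u) := by
    have := hμ.1.symm h1
    rwa [inf_comm u v] at this
  have s3 : μ u (v ⊓ w ⊓ u) := hμ.1.trans s2 s1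
  have s4 : μ (u ⊓ w) (v ⊓ w ⊓ u ⊓ w) := hμ.2.1 u (v ⊓ w ⊓ u) w w s3 (hμ.1.refl w)
  have e : v ⊓ w ⊓ u ⊓ w = v ⊓ w ⊓ u :=
    inf_eq_left.mpr (inf_le_left.trans inf_le_right)
  rw [e] at s4
  have s5 : μ (v ⊓ w ⊓ u) (v ⊓ u) := hμ.2.1 (v ⊓ w) v u u h2 (hμ.1.refl u)
  have s6 : μ (v ⊓ u) u := by rw [inf_comm v u]; exact h1
  exact hμ.1.trans s4 (hμ.1.trans s5 s6)

lemma pre_inf {a b c d : A} (h1 : μ (a ⊓ b) a) (h2 : μ (c ⊓ d) c) :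
    μ ((a ⊓ c) ⊓ (b ⊓ d)) (a ⊓ c) := by
  have h3 := hμ.2.1 _ _ _ _ h1 h2
  rwa [inf_inf_inf_comm] at h3

lemma pre_sup {a c y : A} (h1 : μ (a ⊓ y) a) (h2 : μ (c ⊓ y) c) :
    μ ((a ⊔ c) ⊓ y) (a ⊔ c) := by
  have h3 := hμ.2.2.1 _ _ _ _ h1 h2
  rwa [← inf_sup_right] at h3

/-! ### Separation: prime saturated filters through a quotient-inequality -/

lemma sep {x y : A} (hxy : ¬ μ (x ⊓ y) x) :
    ∃ G : Set A, IsPrimeFilter G ∧ (∀ a b : A, μ a b → (a ∈ G ↔ b ∈ G)) ∧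
      x ∈ G ∧ y ∉ G := by
  classical
  set C : Set (Set A) := {G | x ∈ G ∧ (∀ u ∈ G, ∀ v, μ (u ⊓ v) u → v ∈ G) ∧
    (∀ u ∈ G, ∀ v ∈ G, u ⊓ v ∈ G) ∧ y ∉ G} with hC
  have hG₀ : {v | μ (x ⊓ v) x} ∈ C := by
    refine ⟨pre_refl hμ x, ?_, ?_, hxy⟩
    · exact fun u hu v huv => pre_trans hμ hu huv
    · intro u hu v hv
      have h3 := pre_inf hμ hu hv
      rwa [inf_idem] at h3
  have hzorn := zorn_subset_nonempty C ?_ _ hG₀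
  · obtain ⟨M, _, hMC, hMmax⟩ := hzorn
    obtain ⟨hxM, hMup, hMinf, hyM⟩ := hMC
    -- key enlargement step
    have key : ∀ w, w ∉ M → ∃ m ∈ M, μ ((m ⊓ w) ⊓ y) (m ⊓ w) := by
      intro w hw
      set Mw : Set A := {z | ∃ m ∈ M, μ ((m ⊓ w) ⊓ z) (m ⊓ w)} with hMw
      have hMsub : M ⊆ Mw := fun m hm => ⟨m, hm, pre_of_le hμ inf_le_left⟩
      have hwMw : w ∈ Mw := ⟨x, hxM, pre_of_le hμ inf_le_right⟩
      by_contra hy2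
      push_neg at hy2
      have hMwC : Mw ∈ C := by
        refine ⟨hMsub hxM, ?_, ?_, fun hyMw => ?_⟩
        · rintro u ⟨m, hm, hmu⟩ v huv
          exact ⟨m, hm, pre_trans hμ hmu huv⟩
        · rintro u ⟨m, hm, hmu⟩ v ⟨m', hm', hmv⟩
          refine ⟨m ⊓ m', hMinf m hm m' hm', ?_⟩
          have h1 : μ (((m ⊓ w) ⊓ (m' ⊓ w)) ⊓ (u ⊓ v)) ((m ⊓ w) ⊓ (m' ⊓ w)) :=
            pre_inf hμ hmu hmv
          have h2 : μ (((m ⊓ m') ⊓ w) ⊓ ((m ⊓ w) ⊓ (m' ⊓ w))) ((m ⊓ m') ⊓ w) :=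
            pre_of_le hμ (le_inf
              (le_inf (inf_le_left.trans inf_le_left) inf_le_right)
              (le_inf (inf_le_left.trans inf_le_right) inf_le_right))
          exact pre_trans hμ h2 h1
        · obtain ⟨m, hm, hmy⟩ := hyMw
          exact hy2 m hm hmy
      have := hMmax hMwC hMsub
      exact hw (this hwMw)
    -- primeness
    have hprime : ∀ u v : A, u ⊔ v ∈ M → u ∈ M ∨ v ∈ M := by
      intro u v huv
      by_contra hcon
      push_neg at hcon
      obtain ⟨m, hm, hmy⟩ := key u hcon.1
      obtain ⟨m', hm', hmy'⟩ := key v hcon.2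
      have hN : (m ⊓ m') ⊓ (u ⊔ v) ∈ M := hMinf _ (hMinf m hm m' hm') _ huv
      have h1 : μ (((m ⊓ m') ⊓ u) ⊓ y) ((m ⊓ m') ⊓ u) :=
        pre_trans hμ (pre_of_le hμ (inf_le_inf_right u inf_le_left)) hmy
      have h2 : μ (((m ⊓ m') ⊓ v) ⊓ y) ((m ⊓ m') ⊓ v) :=
        pre_trans hμ (pre_of_le hμ (inf_le_inf_right v inf_le_right)) hmy'
      have h3 := pre_sup hμ h1 h2
      rw [← inf_sup_left] at h3
      exact hyM (hMup _ hN y h3)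
    refine ⟨M, ⟨⟨x, hxM⟩, fun h => hyM (h ▸ Set.mem_univ y), ?_, ?_, hprime⟩, ?_, hxM, hyM⟩
    · exact fun a b ha hab => hMup a ha b (pre_of_le hμ hab)
    · exact fun a b ha hb => hMinf a ha b hb
    · intro a b hab
      exact ⟨fun ha => hMup a ha b (pre_of_mu hμ hab),
        fun hb => hMup b hb a (pre_of_mu hμ (hμ.1.symm hab))⟩
  · -- chains
    intro c hcC hchain hcne
    refine ⟨⋃₀ c, ⟨?_, ?_, ?_, ?_⟩, fun t ht => Set.subset_sUnion_of_mem ht⟩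
    · obtain ⟨t, ht⟩ := hcne
      exact ⟨t, ht, (hcC ht).1⟩
    · rintro u ⟨t, ht, hut⟩ v huv
      exact ⟨t, ht, (hcC ht).2.1 u hut v huv⟩
    · rintro u ⟨t, ht, hut⟩ v ⟨t', ht', hvt'⟩
      rcases hchain.total ht ht' with h | h
      · exact ⟨t', ht', (hcC ht').2.2.1 u (h hut) v hvt'⟩
      · exact ⟨t, ht, (hcC ht).2.2.1 u hut v (h hvt')⟩
    · rintro ⟨t, ht, hyt⟩
      exact (hcC ht).2.2.2 hyt

end mu

/-! ### Every CMI congruence is `nuRel` of a prime filter -/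

lemma cmi_eq_nu (hp : ∀ x y : A, x ⊓ y = ⊥ ↔ x ≤ s y) {μ : A → A → Prop}
    (hμ : IsCMI s μ) : ∃ G : Set A, IsPrimeFilter G ∧ μ = nuRel s G := by
  classical
  set S : Set (A → A → Prop) :=
    {θ | ∃ G : Set A, (IsPrimeFilter G ∧ ∀ a b : A, μ a b → (a ∈ G ↔ b ∈ G)) ∧
      θ = nuRel s G} with hS
  have hmem : μ ∈ S := by
    refine hμ.2 S ?_ ?_
    · rintro θ ⟨G, ⟨hG, _⟩, rfl⟩
      exact nu_pcong hp hG
    · funext a b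
      apply propext
      constructor
      · rintro h θ ⟨G, ⟨hG, hsat⟩, rfl⟩
        exact ⟨hsat a b h,
          (hsat _ _ (mu_s_top hp hμ.1 h)).mpr (PF.top hG),
          (hsat _ _ (mu_s_top hp hμ.1 (hμ.1.1.symm h))).mpr (PF.top hG)⟩
      · intro hall
        by_contra hnot
        by_cases h1 : μ (a ⊓ b) a
        · have h2 : ¬ μ (b ⊓ a) b := by
            intro h2
            have h3 : μ (a ⊓ b) b := by rw [inf_comm a b]; exact h2
            exact hnot (hμ.1.1.trans (hμ.1.1.symm h1) h3)
          obtain ⟨G, hG, hsat, hxG, hyG⟩ := sep hμ.1 h2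
          have := hall (nuRel s G) ⟨G, ⟨hG, hsat⟩, rfl⟩
          exact (hyG (this.1.mpr hxG))
        · obtain ⟨G, hG, hsat, hxG, hyG⟩ := sep hμ.1 h1
          have := hall (nuRel s G) ⟨G, ⟨hG, hsat⟩, rfl⟩
          exact (hyG (this.1.mp hxG))
  obtain ⟨G, ⟨hG, _⟩, hEq⟩ := hmem
  exact ⟨G, hG, hEq⟩


/-! ### `nuRel` is completely meet-irreducible -/

section cmi
variable (hp : ∀ x y : A, x ⊓ y = ⊥ ↔ x ≤ s y) {F : Set A} (hF : IsPrimeFilter F)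
include hp hF

lemma nu_le_q {d c : A} (hd : d ∉ F) : nuRel s F d (d ⊓ (c ⊔ s c)) := by
  refine ⟨iff_of_false hd (fun h => hd (PF.up hF _ _ h inf_le_left)), ?_, ?_⟩
  · rw [L_q hp d c, s_bot hp]
    exact PF.top hF
  · have he : (d ⊓ (c ⊔ s c)) ⊓ s d = ⊥ :=
      le_bot_iff.mp ((inf_le_inf_right (s d) inf_le_left).trans_eq (inf_s_self hp d))
    rw [he, s_bot hp]; exact PF.top hF

lemma nu_cmi : IsCMI s (nuRel s F) := by
  refine ⟨nu_pcong hp hF, ?_⟩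
  intro S hS hEq
  by_contra hns
  have hiff : ∀ a b : A, nuRel s F a b ↔ ∀ θ ∈ S, θ a b := fun a b => by rw [hEq]
  have hsub : ∀ θ ∈ S, ∀ a b : A, nuRel s F a b → θ a b :=
    fun θ hθ a b h => (hiff a b).mp h θ hθ
  have hreach : ∀ θ ∈ S, ∃ c, c ∉ F ∧ θ c ⊤ := by
    intro θ hθ
    have hpc := hS θ hθ
    have hne : θ ≠ nuRel s F := fun h => hns (h ▸ hθ)
    have hex : ∃ a b, θ a b ∧ ¬ nuRel s F a b := by
      by_contra hno
      push_neg at hno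
      exact hne (funext fun a => funext fun b =>
        propext ⟨fun h => hno a b h, fun h => hsub θ hθ a b h⟩)
    obtain ⟨a, b, hab, hnab⟩ := hex
    by_cases hmF : a ∈ F ↔ b ∈ F
    · by_cases hr1 : s (a ⊓ s b) ∈ F
      · exact ⟨s (b ⊓ s a), fun h => hnab ⟨hmF, hr1, h⟩,
          mu_s_top hp hpc (hpc.1.symm hab)⟩
      · exact ⟨s (a ⊓ s b), hr1, mu_s_top hp hpc hab⟩
    · by_cases ha : a ∈ F
      · have hb : b ∉ F := fun hb => hmF (iff_of_true ha hb)
        exact ⟨b, hb,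
          hpc.1.trans (hpc.1.symm hab) (hsub θ hθ a ⊤ ((nu_top hp hF).mpr ha))⟩
      · have hb : b ∈ F := by
          by_contra hb
          exact hmF (iff_of_false ha hb)
        exact ⟨a, ha, hpc.1.trans hab (hsub θ hθ b ⊤ ((nu_top hp hF).mpr hb))⟩
  by_cases hc : ∃ c, c ∉ F ∧ s c ∉ F
  · obtain ⟨c₀, hc₀, hsc₀⟩ := hc
    have hq : c₀ ⊔ s c₀ ∉ F := fun h => ((PF.sup_iff hF).mp h).elim hc₀ hsc₀
    have hν : nuRel s F (c₀ ⊔ s c₀) ⊤ := by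
      refine (hiff _ _).mpr ?_
      intro θ hθ
      have hpc := hS θ hθ
      obtain ⟨c, hcF, hcθ⟩ := hreach θ hθ
      have h3 : θ c (c ⊓ (c₀ ⊔ s c₀)) := hsub θ hθ _ _ (nu_le_q hp hF hcF)
      have h4 : θ ((c₀ ⊔ s c₀) ⊓ c) ((c₀ ⊔ s c₀) ⊓ ⊤) :=
        hpc.2.1 _ _ _ _ (hpc.1.refl (c₀ ⊔ s c₀)) hcθ
      rw [inf_top_eq] at h4
      have h5 : θ ((c₀ ⊔ s c₀) ⊓ c) ⊤ := by
        rw [inf_comm]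
        exact hpc.1.trans (hpc.1.symm h3) hcθ
      exact hpc.1.trans (hpc.1.symm h4) h5
    exact hq ((nu_top hp hF).mp hν)
  · push_neg at hc
    have hν : nuRel s F ⊥ ⊤ := by
      refine (hiff _ _).mpr ?_
      intro θ hθ
      have hpc := hS θ hθ
      obtain ⟨c, hcF, hcθ⟩ := hreach θ hθ
      have hbc : nuRel s F ⊥ c := by
        refine ⟨iff_of_false (PF.nbot hF) hcF, ?_, ?_⟩
        · rw [bot_inf_eq, s_bot hp]; exact PF.top hF
        · rw [s_bot hp, inf_top_eq]; exact hc c hcF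
      exact hpc.1.trans (hsub θ hθ _ _ hbc) hcθ
    exact PF.nbot hF ((nu_top hp hF).mp hν)

end cmi

end PAlg

/-- The map `μ ↦ {a | a μ ⊤}` is a bijection from the completely meet-irreducible
congruences of a p-algebra onto its prime filters. -/
theorem stmt8 [DistribLattice A] [BoundedOrder A] (star : A → A)
    (hp : ∀ x y : A, x ⊓ y = ⊥ ↔ x ≤ star y) :
    Set.BijOn (fun μ : A → A → Prop => {a : A | μ a ⊤})
      {μ : A → A → Prop | IsCMI star μ} {F : Set A | IsPrimeFilter F} := by
  refine ⟨?_, ?_, ?_⟩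
  · intro μ hμ
    obtain ⟨G, hG, rfl⟩ := cmi_eq_nu hp hμ
    show {a : A | nuRel star G a ⊤} ∈ _
    rw [nu_topclass hp hG]
    exact hG
  · intro μ1 h1 μ2 h2 he
    obtain ⟨G1, hG1, rfl⟩ := cmi_eq_nu hp h1
    obtain ⟨G2, hG2, rfl⟩ := cmi_eq_nu hp h2
    have hGG : G1 = G2 := by
      rw [← nu_topclass hp hG1, ← nu_topclass hp hG2]
      exact he
    rw [hGG]
  · intro F hF
    exact ⟨nuRel star F, nu_cmi hp hF, nu_topclass hp hF⟩
end

section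
/- Let A be a p-algebra. For a ∈ A let M̂(a) denote the set of completely meet-irreducible congruences μ on A with a μ ⊤. Then for all a, b ∈ A: M̂(a ⊓ b) = M̂(a) ∩ M̂(b); M̂(a ⊔ b) = M̂(a) ∪ M̂(b); M̂(⊥) = ∅; M̂(⊤) is the set of all completely meet-irreducible congruences; M̂(a*) = { μ completely meet-irreducible : there is no completely meet-irreducible congruence ν with μ ⊆ ν and a ν ⊤ }; and the map M̂ is injective. -/
variable {A : Type*}

/-- `Mhat star a` is the set of completely meet-irreducible congruences relating `a`
to `⊤`. -/
def Mhat [Lattice A] [OrderTop A] (star : A → A) (a : A) : Set (A → A → Prop) :=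
  {μ : A → A → Prop | IsCMI star μ ∧ μ a ⊤}


set_option linter.unusedSectionVars false

section Aux
variable [DistribLattice A] [BoundedOrder A] {star : A → A}

lemma star_le_star (hp : ∀ x y : A, x ⊓ y = ⊥ ↔ x ≤ star y) {u v : A} (h : u ≤ v) :
    star v ≤ star u := by
  have h1 : star v ⊓ v = ⊥ := (hp _ _).mpr le_rfl
  exact (hp _ _).mp (le_bot_iff.mp (le_trans (inf_le_inf_left _ h) (le_of_eq h1)))

lemma star_meet (hp : ∀ x y : A, x ⊓ y = ⊥ ↔ x ≤ star y) (x a : A) :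
    star x ⊓ a = star (x ⊓ a) ⊓ a := by
  apply le_antisymm
  · exact inf_le_inf_right a (star_le_star hp inf_le_left)
  · refine le_inf ?_ inf_le_right
    apply (hp _ _).mp
    calc (star (x ⊓ a) ⊓ a) ⊓ x = star (x ⊓ a) ⊓ (x ⊓ a) := by
          rw [inf_assoc, inf_comm a x]
      _ = ⊥ := (hp _ _).mpr le_rfl

lemma total_of_bot_top {μ : A → A → Prop} (hμ : IsPCong star μ) (h : μ ⊥ ⊤) (x y : A) :
    μ x y := by
  have hx : μ x ⊥ := by
    have h1 := hμ.2.1 x x ⊥ ⊤ (hμ.1.refl x) h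
    simpa using hμ.1.symm h1
  have hy : μ y ⊥ := by
    have h1 := hμ.2.1 y y ⊥ ⊤ (hμ.1.refl y) h
    simpa using hμ.1.symm h1
  exact hμ.1.trans hx (hμ.1.symm hy)

lemma top_rel_mono {μ : A → A → Prop} (hμ : IsPCong star μ) {a b : A}
    (h : μ a ⊤) (hab : a ≤ b) : μ b ⊤ := by
  have h1 := hμ.2.2.1 b b a ⊤ (hμ.1.refl b) h
  simpa [sup_eq_left.mpr hab] using h1

lemma nu_pcong_s10 (hp : ∀ x y : A, x ⊓ y = ⊥ ↔ x ≤ star y) {μ : A → A → Prop}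
    (hμ : IsPCong star μ) (a : A) :
    IsPCong star (fun x y => μ (x ⊓ a) (y ⊓ a)) := by
  refine ⟨⟨fun x => hμ.1.refl _, fun h => hμ.1.symm h, fun h1 h2 => hμ.1.trans h1 h2⟩,
    ?_, ?_, ?_⟩
  · intro x y u v h1 h2
    have h3 := hμ.2.1 _ _ _ _ h1 h2
    have e : ∀ p q : A, (p ⊓ q) ⊓ a = (p ⊓ a) ⊓ (q ⊓ a) := fun p q => inf_inf_distrib_right p q a
    rw [e x u, e y v]
    exact h3
  · intro x y u v h1 h2
    have h3 := hμ.2.2.1 _ _ _ _ h1 h2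
    rw [inf_sup_right, inf_sup_right]
    exact h3
  · intro x y h
    have h1 := hμ.2.2.2 _ _ h
    have h2 := hμ.2.1 _ _ _ _ h1 (hμ.1.refl a)
    rw [star_meet hp x a, star_meet hp y a]
    exact h2

end Aux


section Aux2
variable [DistribLattice A] [BoundedOrder A] {star : A → A}

lemma cmi_not_bot_top {μ : A → A → Prop} (h : IsCMI star μ) : ¬ μ ⊥ ⊤ := by
  intro hbt
  have htot := fun x y => (by
    have hx : μ x ⊥ := by
      have h1 := h.1.2.1 x x ⊥ ⊤ (h.1.1.refl x) hbt
      simpa using h.1.1.symm h1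
    have hy : μ y ⊥ := by
      have h1 := h.1.2.1 y y ⊥ ⊤ (h.1.1.refl y) hbt
      simpa using h.1.1.symm h1
    exact h.1.1.trans hx (h.1.1.symm hy) : μ x y)
  have : μ ∈ (∅ : Set (A → A → Prop)) := by
    apply h.2 ∅ (by simp)
    funext x y
    apply propext
    constructor
    · intro _ θ hθ; exact absurd hθ (Set.notMem_empty θ)
    · intro _; exact htot x y
  exact this

lemma exists_cmi_above {θ : A → A → Prop} (hθ : IsPCong star θ) {x y : A} (h : ¬ θ x y) :
    ∃ μ : A → A → Prop, IsCMI star μ ∧ (∀ u v : A, θ u v → μ u v) ∧ ¬ μ x y := by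
  set S : Set (Set (A × A)) :=
    {s | IsPCong star (fun u v => (u, v) ∈ s) ∧ (∀ u v : A, θ u v → (u, v) ∈ s) ∧ (x, y) ∉ s}
    with hS
  have hx0 : {p : A × A | θ p.1 p.2} ∈ S := ⟨hθ, fun u v hv => hv, h⟩
  have hchain : ∀ c ⊆ S, IsChain (· ⊆ ·) c → c.Nonempty →
      ∃ ub ∈ S, ∀ s ∈ c, s ⊆ ub := by
    intro c hcS hc ⟨s0, hs0⟩
    have hcc : ∀ s t, s ∈ c → t ∈ c → s ⊆ t ∨ t ⊆ s := by
      intro s t hs ht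
      rcases eq_or_ne s t with rfl | hne
      · exact Or.inl (subset_refl s)
      · rcases hc hs ht hne with h' | h'
        · exact Or.inl h'
        · exact Or.inr h'
    refine ⟨⋃₀ c, ⟨⟨⟨?_, ?_, ?_⟩, ?_, ?_, ?_⟩, ?_, ?_⟩, fun s hs => Set.subset_sUnion_of_mem hs⟩
    · intro u
      exact ⟨s0, hs0, ((hcS hs0).1.1.refl u : (u, u) ∈ s0)⟩
    · rintro u v ⟨s, hs, huv⟩
      exact ⟨s, hs, (hcS hs).1.1.symm huv⟩
    · rintro u v w ⟨s, hs, huv⟩ ⟨t, ht, hvw⟩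
      rcases hcc s t hs ht with h' | h'
      · exact ⟨t, ht, (hcS ht).1.1.trans (h' huv) hvw⟩
      · exact ⟨s, hs, (hcS hs).1.1.trans huv (h' hvw)⟩
    · rintro a b cc d ⟨s, hs, hab⟩ ⟨t, ht, hcd⟩
      rcases hcc s t hs ht with h' | h'
      · exact ⟨t, ht, (hcS ht).1.2.1 a b cc d (h' hab) hcd⟩
      · exact ⟨s, hs, (hcS hs).1.2.1 a b cc d hab (h' hcd)⟩
    · rintro a b cc d ⟨s, hs, hab⟩ ⟨t, ht, hcd⟩
      rcases hcc s t hs ht with h' | h'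
      · exact ⟨t, ht, (hcS ht).1.2.2.1 a b cc d (h' hab) hcd⟩
      · exact ⟨s, hs, (hcS hs).1.2.2.1 a b cc d hab (h' hcd)⟩
    · rintro a b ⟨s, hs, hab⟩
      exact ⟨s, hs, (hcS hs).1.2.2.2 a b hab⟩
    · intro u v huv
      exact ⟨s0, hs0, (hcS hs0).2.1 u v huv⟩
    · rintro ⟨s, hs, hxy⟩
      exact (hcS hs).2.2 hxy
  obtain ⟨m, hsub, hmax⟩ := zorn_subset_nonempty S hchain _ hx0
  refine ⟨fun u v => (u, v) ∈ m, ⟨hmax.prop.1, ?_⟩,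
    fun u v huv => hsub (show (u, v) ∈ {p : A × A | θ p.1 p.2} from huv), hmax.prop.2.2⟩
  intro Sf hall heq
  by_contra hnot
  have hxy : ∀ ν ∈ Sf, ν x y := by
    intro ν hν
    by_contra hνxy
    have hsubν : ∀ u v : A, (u, v) ∈ m → ν u v := by
      intro u v huv
      have h2 : (fun u v : A => (u, v) ∈ m) u v := huv
      rw [heq] at h2
      exact h2 ν hν
    have hνS : {p : A × A | ν p.1 p.2} ∈ S :=
      ⟨hall ν hν, fun u v huv => hsubν u v (hmax.prop.2.1 u v huv), hνxy⟩
    have hmν : m ⊆ {p : A × A | ν p.1 p.2} := fun p hp => hsubν p.1 p.2 hp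
    have hequal : {p : A × A | ν p.1 p.2} ⊆ m := hmax.2 hνS hmν
    have : ν = fun u v : A => (u, v) ∈ m := by
      funext u v
      exact propext ⟨fun h' => hequal h', fun h' => hsubν u v h'⟩
    apply hnot
    rw [heq] at this
    rw [this] at hν
    rw [heq]
    exact hν
  have h4 : (fun u v : A => (u, v) ∈ m) x y := by
    rw [heq]; exact fun ν hν => hxy ν hν
  exact hmax.prop.2.2 h4

end Aux2


section Aux3
variable [DistribLattice A] [BoundedOrder A] {star : A → A}

lemma cmi_prime (hp : ∀ x y : A, x ⊓ y = ⊥ ↔ x ≤ star y) {μ : A → A → Prop}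
    (h : IsCMI star μ) {a b : A} (hab : μ (a ⊔ b) ⊤) : μ a ⊤ ∨ μ b ⊤ := by
  by_contra hc
  push_neg at hc
  obtain ⟨ha, hb⟩ := hc
  set νa : A → A → Prop := fun x y => μ (x ⊓ a) (y ⊓ a) with hνa
  set νb : A → A → Prop := fun x y => μ (x ⊓ b) (y ⊓ b) with hνb
  have hpa : IsPCong star νa := nu_pcong_s10 hp h.1 a
  have hpb : IsPCong star νb := nu_pcong_s10 hp h.1 b
  have hSeq : μ = fun x y => ∀ θ ∈ ({νa, νb} : Set (A → A → Prop)), θ x y := by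
    funext x y
    apply propext
    constructor
    · intro hxy θ hθ
      rcases hθ with rfl | hθ
      · exact h.1.2.1 _ _ _ _ hxy (h.1.1.refl a)
      · rw [Set.mem_singleton_iff] at hθ
        subst hθ
        exact h.1.2.1 _ _ _ _ hxy (h.1.1.refl b)
    · intro hall
      have h1 : μ (x ⊓ a) (y ⊓ a) := hall νa (Set.mem_insert _ _)
      have h2 : μ (x ⊓ b) (y ⊓ b) := hall νb (by simp)
      have h3 := h.1.2.2.1 _ _ _ _ h1 h2
      rw [← inf_sup_left, ← inf_sup_left] at h3
      have h5 : μ x (x ⊓ (a ⊔ b)) := by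
        have := h.1.2.1 x x (a ⊔ b) ⊤ (h.1.1.refl x) hab
        simpa using h.1.1.symm this
      have h6 : μ y (y ⊓ (a ⊔ b)) := by
        have := h.1.2.1 y y (a ⊔ b) ⊤ (h.1.1.refl y) hab
        simpa using h.1.1.symm this
      exact h.1.1.trans h5 (h.1.1.trans h3 (h.1.1.symm h6))
  have hmem := h.2 {νa, νb} (by
    rintro θ (rfl | hθ)
    · exact hpa
    · rw [Set.mem_singleton_iff] at hθ; subst hθ; exact hpb) hSeq
  rcases hmem with hμa | hμb
  · apply ha
    rw [hμa]
    show μ (a ⊓ a) (⊤ ⊓ a)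
    simpa using h.1.1.refl a
  · rw [Set.mem_singleton_iff] at hμb
    apply hb
    rw [hμb]
    show μ (b ⊓ b) (⊤ ⊓ b)
    simpa using h.1.1.refl b

end Aux3

/-- Properties of the map `M̂ : a ↦ {μ completely meet-irreducible : a μ ⊤}` on a
p-algebra: it turns `⊓, ⊔, ⊥, ⊤, *` into `∩, ∪, ∅, Cm(A)` and the pseudocomplement
of upper sets, and it is injective. -/
theorem stmt10 [DistribLattice A] [BoundedOrder A] (star : A → A)
    (hp : ∀ x y : A, x ⊓ y = ⊥ ↔ x ≤ star y) :
    (∀ a b : A, Mhat star (a ⊓ b) = Mhat star a ∩ Mhat star b) ∧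
    (∀ a b : A, Mhat star (a ⊔ b) = Mhat star a ∪ Mhat star b) ∧
    Mhat star (⊥ : A) = ∅ ∧
    Mhat star (⊤ : A) = {μ : A → A → Prop | IsCMI star μ} ∧
    (∀ a : A, Mhat star (star a) =
      {μ : A → A → Prop | IsCMI star μ ∧
        ¬ ∃ ν : A → A → Prop, IsCMI star ν ∧ (∀ x y : A, μ x y → ν x y) ∧ ν a ⊤}) ∧
    (∀ a b : A, Mhat star a = Mhat star b → a = b) := by
  have eqpc : IsPCong star (fun x y : A => x = y) :=
    ⟨⟨fun _ => rfl, fun h => h.symm, fun h1 h2 => h1.trans h2⟩,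
      fun a b c d h1 h2 => by rw [h1, h2], fun a b c d h1 h2 => by rw [h1, h2],
      fun a b h1 => by rw [h1]⟩
  have theta_pcong : ∀ u : A, IsPCong star (fun x y : A => x ⊓ u = y ⊓ u) :=
    fun u => nu_pcong_s10 hp eqpc u
  have mhat_mono : ∀ u v : A, u ≤ v → Mhat star u ⊆ Mhat star v := by
    intro u v huv μ hμ
    exact ⟨hμ.1, top_rel_mono hμ.1.1 hμ.2 huv⟩
  have le_of_sub : ∀ u v : A, Mhat star u ⊆ Mhat star v → u ≤ v := by
    intro u v hsub
    by_contra hle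
    have hθ : ¬ (v ⊓ u = ⊤ ⊓ u) := by
      rw [top_inf_eq]
      intro hvu
      exact hle (by rw [← hvu]; exact inf_le_left)
    obtain ⟨μ, hcmi, hext, hnxy⟩ := exists_cmi_above (theta_pcong u) hθ
    have hμu : μ u ⊤ := hext u ⊤ (by rw [top_inf_eq, inf_idem])
    exact hnxy ((hsub ⟨hcmi, hμu⟩).2)
  refine ⟨?_, ?_, ?_, ?_, ?_, ?_⟩
  · intro a b
    ext μ
    constructor
    · rintro ⟨hμ, h⟩
      exact ⟨⟨hμ, top_rel_mono hμ.1 h inf_le_left⟩, ⟨hμ, top_rel_mono hμ.1 h inf_le_right⟩⟩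
    · rintro ⟨⟨hμ, h1⟩, ⟨-, h2⟩⟩
      refine ⟨hμ, ?_⟩
      have := hμ.1.2.1 a ⊤ b ⊤ h1 h2
      simpa using this
  · intro a b
    ext μ
    constructor
    · rintro ⟨hμ, h⟩
      rcases cmi_prime hp hμ h with h' | h'
      · exact Or.inl ⟨hμ, h'⟩
      · exact Or.inr ⟨hμ, h'⟩
    · rintro (⟨hμ, h⟩ | ⟨hμ, h⟩)
      · exact ⟨hμ, top_rel_mono hμ.1 h le_sup_left⟩
      · exact ⟨hμ, top_rel_mono hμ.1 h le_sup_right⟩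
  · ext μ
    simp only [Mhat, Set.mem_setOf_eq, Set.mem_empty_iff_false, iff_false, not_and]
    intro hμ
    exact cmi_not_bot_top hμ
  · ext μ
    exact ⟨fun h => h.1, fun h => ⟨h, h.1.1.refl ⊤⟩⟩
  · intro a
    ext μ
    simp only [Mhat, Set.mem_setOf_eq]
    constructor
    · rintro ⟨hμ, hstar⟩
      refine ⟨hμ, ?_⟩
      rintro ⟨ν, hν, hsubν, hνa⟩
      apply cmi_not_bot_top hν
      have h1 : ν (a ⊓ star a) (⊤ ⊓ ⊤) := hν.1.2.1 _ _ _ _ hνa (hsubν _ _ hstar)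
      have h2 : a ⊓ star a = ⊥ := by rw [inf_comm]; exact (hp _ _).mpr le_rfl
      rwa [h2, top_inf_eq] at h1
    · rintro ⟨hμ, hno⟩
      refine ⟨hμ, ?_⟩
      by_contra hns
      have hnba : ¬ μ ⊥ a := by
        intro hba
        apply hns
        have h1 := hμ.1.2.2.2 _ _ hba
        have hsb : star (⊥ : A) = ⊤ :=
          top_le_iff.mp ((hp ⊤ ⊥).mp (inf_bot_eq ⊤))
        rw [hsb] at h1
        exact hμ.1.1.symm h1
      have hν0 : IsPCong star (fun x y : A => μ (x ⊓ a) (y ⊓ a)) := nu_pcong_s10 hp hμ.1 a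
      have hsa : star a ⊓ a = ⊥ := (hp _ _).mpr le_rfl
      have hnot0 : ¬ (fun x y : A => μ (x ⊓ a) (y ⊓ a)) (star a) ⊤ := by
        show ¬ μ (star a ⊓ a) (⊤ ⊓ a)
        rw [hsa, top_inf_eq]
        exact hnba
      obtain ⟨ν, hcmi, hext, hnxy⟩ := exists_cmi_above hν0 hnot0
      exact hno ⟨ν, hcmi,
        fun x y hxy => hext x y (hμ.1.2.1 _ _ _ _ hxy (hμ.1.1.refl a)),
        hext a ⊤ (by show μ (a ⊓ a) (⊤ ⊓ a); simpa using hμ.1.1.refl a)⟩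
  · intro a b hM
    exact le_antisymm (le_of_sub a b (le_of_eq hM)) (le_of_sub b a (le_of_eq hM.symm))
end

section
/- Let A be a finite p-algebra, let Cm(A) be its set of completely meet-irreducible congruences, ordered by μ ≤꜀ ν iff the ⊤-class of μ is contained in the ⊤-class of ν. For a ∈ A let M̂(a) = {μ ∈ Cm(A) : a μ ⊤}. Then: (1) each M̂(a) is an upper set of (Cm(A), ≤꜀); (2) the map a ↦ M̂(a) is a bijection from A onto the set of all upper sets of (Cm(A), ≤꜀); (3) M̂(a ⊓ b) = M̂(a) ∩ M̂(b), M̂(a ⊔ b) = M̂(a) ∪ M̂(b), M̂(⊥) = ∅, M̂(⊤) = Cm(A), and M̂(a*) = {μ ∈ Cm(A) : there is no ν ∈ M̂(a) with μ ≤꜀ ν}. In other words, A is isomorphic as a p-algebra to the p-algebra of upper sets of (Cm(A), ≤꜀). -/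
/-!
In a finite p-algebra the `⊤`-class of a completely meet-irreducible congruence `μ` is a prime
filter, hence a principal filter `↑q` with `q` join-prime. Primality holds because, when
`a ⊔ b` is in the class, `μ` is the intersection of the two congruences
`x ~ y ↔ μ (x ⊓ c) (y ⊓ c)` for `c = a, b`, so it equals one of them. Conversely every
join-prime `q` arises: a congruence maximal among those with `⊤`-class `↑q` is completely
meet-irreducible, because every strictly larger congruence relates `⊤` to the largest element
not above `q`.

So `μ ↦ q` turns `≤꜀` into the reverse order of join-primes, `M̂(a)` into the set of
join-primes below `a`, and the theorem into Birkhoff's representation of `A` by the lower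
sets of its join-irreducibles. For the pseudocomplement, `q ≤ a*` iff `q ⊓ a = ⊥` iff no
join-irreducible lies below both `q` and `a`.
-/

variable {A : Type*}

/-- The order `≤꜀` on completely meet-irreducible congruences: inclusion of
`⊤`-classes. -/
def leC [Lattice A] [OrderTop A] (μ ν : A → A → Prop) : Prop :=
  {a : A | μ a ⊤} ⊆ {a : A | ν a ⊤}

/-- `U` is an upper set of `(Cm(A), ≤꜀)`. -/
def IsUpperCm [Lattice A] [OrderTop A] (star : A → A) (U : Set (A → A → Prop)) : Prop :=
  U ⊆ {μ : A → A → Prop | IsCMI star μ} ∧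
  ∀ μ ∈ U, ∀ ν : A → A → Prop, IsCMI star ν → leC μ ν → ν ∈ U

def IsPseudocomplement [Lattice A] [OrderBot A] (star : A → A) : Prop :=
  ∀ x y : A, x ⊓ y = ⊥ ↔ x ≤ star y

namespace IsPseudocomplement

variable [Lattice A] [OrderBot A] {star : A → A}

lemma star_inf_self (hp : IsPseudocomplement star) (a : A) : star a ⊓ a = ⊥ :=
  (hp _ _).2 le_rfl

lemma star_inf_inf (hp : IsPseudocomplement star) (x c : A) :
    star (x ⊓ c) ⊓ c = star x ⊓ c := by
  apply le_antisymm
  · refine le_inf ((hp _ _).1 ?_) inf_le_right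
    calc star (x ⊓ c) ⊓ c ⊓ x = star (x ⊓ c) ⊓ (x ⊓ c) := by ac_rfl
      _ = ⊥ := hp.star_inf_self _
  · refine le_inf ((hp _ _).1 (le_bot_iff.1 ?_)) inf_le_right
    calc star x ⊓ c ⊓ (x ⊓ c) ≤ star x ⊓ x := inf_le_inf inf_le_left inf_le_left
      _ = ⊥ := hp.star_inf_self x

end IsPseudocomplement

lemma isPCong_eq [Lattice A] (star : A → A) : IsPCong star (Eq : A → A → Prop) :=
  ⟨eq_equivalence, fun _ _ _ _ h₁ h₂ => h₁ ▸ h₂ ▸ rfl, fun _ _ _ _ h₁ h₂ => h₁ ▸ h₂ ▸ rfl,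
    fun _ _ h => h ▸ rfl⟩

namespace IsPCong

variable [Lattice A] {star : A → A} {θ : A → A → Prop} {x y : A}

lemma top_of_le [OrderTop A] (h : IsPCong star θ) (hx : θ x ⊤) (hxy : x ≤ y) : θ y ⊤ := by
  simpa [sup_eq_right.2 hxy] using h.2.2.1 x ⊤ y y hx (h.1.refl y)

lemma inf_top [OrderTop A] (h : IsPCong star θ) (hx : θ x ⊤) (hy : θ y ⊤) : θ (x ⊓ y) ⊤ := by
  simpa using h.2.1 x ⊤ y ⊤ hx hy

lemma total_of_bot_top [BoundedOrder A] (h : IsPCong star θ) (hbt : θ ⊥ ⊤) (x y : A) :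
    θ x y :=
  h.1.trans (h.top_of_le hbt bot_le) (h.1.symm (h.top_of_le hbt bot_le))

end IsPCong

lemma IsPCong.inf_right [DistribLattice A] [OrderBot A] {star : A → A} {θ : A → A → Prop}
    (hp : IsPseudocomplement star) (h : IsPCong star θ) (c : A) :
    IsPCong star (fun x y => θ (x ⊓ c) (y ⊓ c)) := by
  obtain ⟨hequiv, hinf, hsup, hstar⟩ := h
  refine ⟨⟨fun x => hequiv.refl _, hequiv.symm, hequiv.trans⟩, fun a b x y hab hxy => ?_,
    fun a b x y hab hxy => ?_, fun a b hab => ?_⟩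
  · simpa only [← inf_inf_distrib_right] using hinf _ _ _ _ hab hxy
  · simpa only [← inf_sup_right] using hsup _ _ _ _ hab hxy
  · simpa only [hp.star_inf_inf] using hinf _ _ _ _ (hstar _ _ hab) (hequiv.refl c)

namespace IsCMI

variable {star : A → A} {μ : A → A → Prop}

lemma not_total [Lattice A] (h : IsCMI star μ) : ¬ ∀ x y, μ x y := fun htot => by
  simpa using h.2 ∅ (by simp) (by funext x y; simp [htot x y])

lemma not_bot_top [Lattice A] [BoundedOrder A] (h : IsCMI star μ) : ¬ μ ⊥ ⊤ :=
  fun hbt => h.not_total (h.1.total_of_bot_top hbt)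

lemma eq_or_eq_of_eq_inf [Lattice A] {θ₁ θ₂ : A → A → Prop} (h : IsCMI star μ)
    (h₁ : IsPCong star θ₁) (h₂ : IsPCong star θ₂) (heq : μ = fun x y => θ₁ x y ∧ θ₂ x y) :
    μ = θ₁ ∨ μ = θ₂ :=
  h.2 {θ₁, θ₂} (by rintro θ (rfl | rfl) <;> assumption) (by rw [heq]; simp)

lemma top_of_sup_top [DistribLattice A] [BoundedOrder A] (hp : IsPseudocomplement star)
    (h : IsCMI star μ) {a b : A} (hab : μ (a ⊔ b) ⊤) : μ a ⊤ ∨ μ b ⊤ := by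
  obtain ⟨hequiv, hinf, hsup, -⟩ := h.1
  have hsplit : μ = fun x y => μ (x ⊓ a) (y ⊓ a) ∧ μ (x ⊓ b) (y ⊓ b) := by
    funext x y
    refine propext ⟨fun hxy => ⟨hinf _ _ _ _ hxy (hequiv.refl a),
      hinf _ _ _ _ hxy (hequiv.refl b)⟩, fun ⟨ha, hb⟩ => ?_⟩
    have hx : ∀ z, μ z (z ⊓ (a ⊔ b)) := fun z => by
      simpa using hinf _ _ _ _ (hequiv.refl z) (hequiv.symm hab)
    have hab' : μ (x ⊓ (a ⊔ b)) (y ⊓ (a ⊔ b)) := by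
      simpa only [← inf_sup_left] using hsup _ _ _ _ ha hb
    exact hequiv.trans (hequiv.trans (hx x) hab') (hequiv.symm (hx y))
  have hself : ∀ c, μ = (fun x y => μ (x ⊓ c) (y ⊓ c)) → μ c ⊤ := fun c hc =>
    (congrFun₂ hc c ⊤).mpr (by simpa using hequiv.refl c)
  exact (h.eq_or_eq_of_eq_inf (h.1.inf_right hp a) (h.1.inf_right hp b) hsplit).imp
    (hself a) (hself b)

lemma exists_supPrime_top_iff [DistribLattice A] [BoundedOrder A] [Finite A]
    (hp : IsPseudocomplement star) (h : IsCMI star μ) :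
    ∃ q : A, SupPrime q ∧ ∀ x, μ x ⊤ ↔ q ≤ x := by
  obtain ⟨q, hq⟩ := (Set.toFinite {x : A | μ x ⊤}).exists_minimal ⟨⊤, h.1.1.refl ⊤⟩
  have hiff : ∀ x, μ x ⊤ ↔ q ≤ x := fun x =>
    ⟨fun hx => inf_eq_left.1 (hq.eq_of_le (h.1.inf_top hq.prop hx) inf_le_left),
      h.1.top_of_le hq.prop⟩
  refine ⟨q, ⟨fun hmin => h.not_bot_top (hmin.eq_bot ▸ hq.prop), fun b c hbc => ?_⟩, hiff⟩
  simpa only [hiff] using h.top_of_sup_top hp ((hiff _).2 hbc)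

end IsCMI

lemma SupPrime.exists_forall_le_iff_not_le [SemilatticeSup A] [Finite A] {q : A}
    (hq : SupPrime q) : ∃ b : A, ∀ x, x ≤ b ↔ ¬ q ≤ x := by
  obtain ⟨x₀, hx₀⟩ := not_isMin_iff.1 hq.1
  obtain ⟨b, hb⟩ := (Set.toFinite {x : A | ¬ q ≤ x}).exists_maximal ⟨x₀, hx₀.not_ge⟩
  refine ⟨b, fun x => ⟨fun hxb hqx => hb.prop (hqx.trans hxb), fun hx => ?_⟩⟩
  have hxb : ¬ q ≤ x ⊔ b := fun h => (hq.le_sup.1 h).elim hx hb.prop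
  exact le_sup_left.trans (hb.eq_of_le hxb le_sup_right).ge

lemma exists_isCMI_top_iff_of_supPrime [DistribLattice A] [BoundedOrder A] [Finite A]
    {star : A → A} (hp : IsPseudocomplement star) {q : A} (hq : SupPrime q) :
    ∃ μ : A → A → Prop, IsCMI star μ ∧ ∀ x, μ x ⊤ ↔ q ≤ x := by
  set S := {θ : A → A → Prop | IsPCong star θ ∧ ∀ x, θ x ⊤ ↔ q ≤ x}
  have hS : S.Nonempty := ⟨fun x y => x ⊓ q = y ⊓ q, (isPCong_eq star).inf_right hp q,
    fun x => by simp⟩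
  obtain ⟨μ, hmax⟩ := S.toFinite.exists_maximal hS
  obtain ⟨b, hb⟩ := hq.exists_forall_le_iff_not_le
  refine ⟨μ, ⟨hmax.prop.1, fun T hT hμT => ?_⟩, hmax.prop.2⟩
  by_contra hμT'
  have hle : ∀ θ ∈ T, μ ≤ θ := by
    intro θ hθ x y hxy
    rw [hμT] at hxy
    exact hxy θ hθ
  have hbT : ∀ θ ∈ T, θ b ⊤ := by
    intro θ hθ
    have hθS : θ ∉ S := fun hθS => hμT' (hmax.eq_of_le hθS (hle θ hθ) ▸ hθ)
    obtain ⟨x, hxθ, hqx⟩ : ∃ x, θ x ⊤ ∧ ¬ q ≤ x := by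
      by_contra! hθtop
      exact hθS ⟨hT θ hθ, fun x => ⟨hθtop x, fun hqx => hle θ hθ x ⊤ ((hmax.prop.2 x).2 hqx)⟩⟩
    exact (hT θ hθ).top_of_le hxθ ((hb x).2 hqx)
  exact (hb b).1 le_rfl ((hmax.prop.2 b).1 (by rw [hμT]; exact hbT))

lemma le_of_forall_supIrred_le [SemilatticeSup A] [OrderBot A] [WellFoundedLT A] {a b : A}
    (h : ∀ q, SupIrred q → q ≤ a → q ≤ b) : a ≤ b := by
  obtain ⟨s, rfl, hs⟩ := exists_supIrred_decomposition a
  exact Finset.sup_le fun q hq => h q (hs hq) (Finset.le_sup (f := id) hq)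

lemma exists_supIrred_le_of_ne_bot [SemilatticeSup A] [OrderBot A] [WellFoundedLT A] {a : A}
    (ha : a ≠ ⊥) : ∃ q, SupIrred q ∧ q ≤ a := by
  by_contra! h
  exact ha (le_bot_iff.1 (le_of_forall_supIrred_le fun q hq hqa => absurd hqa (h q hq)))

section Mhat

variable {star : A → A}

lemma isUpperCm_mhat [Lattice A] [OrderTop A] (a : A) : IsUpperCm star (Mhat star a) :=
  ⟨fun _ hμ => hμ.1, fun _ hμ _ hν hle => ⟨hν, hle hμ.2⟩⟩

lemma mhat_top [Lattice A] [OrderTop A] : Mhat star (⊤ : A) = {μ | IsCMI star μ} :=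
  Set.ext fun _ => ⟨fun h => h.1, fun h => ⟨h, h.1.1.refl ⊤⟩⟩

lemma mhat_bot [Lattice A] [BoundedOrder A] : Mhat star (⊥ : A) = ∅ :=
  Set.eq_empty_of_forall_notMem fun _ ⟨h, hbt⟩ => h.not_bot_top hbt

lemma mhat_inf [Lattice A] [OrderTop A] (a b : A) :
    Mhat star (a ⊓ b) = Mhat star a ∩ Mhat star b := by
  ext μ
  exact ⟨fun ⟨h, hab⟩ => ⟨⟨h, h.1.top_of_le hab inf_le_left⟩, ⟨h, h.1.top_of_le hab inf_le_right⟩⟩,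
    fun ⟨⟨h, ha⟩, ⟨_, hb⟩⟩ => ⟨h, h.1.inf_top ha hb⟩⟩

lemma mhat_sup [DistribLattice A] [BoundedOrder A] (hp : IsPseudocomplement star) (a b : A) :
    Mhat star (a ⊔ b) = Mhat star a ∪ Mhat star b := by
  ext μ
  constructor
  · rintro ⟨h, hab⟩
    exact (h.top_of_sup_top hp hab).imp (⟨h, ·⟩) (⟨h, ·⟩)
  · rintro (⟨h, ha⟩ | ⟨h, hb⟩)
    exacts [⟨h, h.1.top_of_le ha le_sup_left⟩, ⟨h, h.1.top_of_le hb le_sup_right⟩]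

variable [DistribLattice A] [BoundedOrder A] [Finite A] (hp : IsPseudocomplement star)
include hp

lemma mhat_subset_mhat_iff {a b : A} : Mhat star a ⊆ Mhat star b ↔ a ≤ b := by
  refine ⟨fun hab => le_of_forall_supIrred_le fun q hq hqa => ?_,
    fun hab _ ⟨h, ha⟩ => ⟨h, h.1.top_of_le ha hab⟩⟩
  obtain ⟨μ, h, hμ⟩ := exists_isCMI_top_iff_of_supPrime hp (supPrime_iff_supIrred.2 hq)
  exact (hμ b).1 (hab ⟨h, (hμ a).2 hqa⟩).2

lemma mhat_injective : Function.Injective (Mhat star : A → Set (A → A → Prop)) :=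
  fun _ _ hab => le_antisymm ((mhat_subset_mhat_iff hp).1 hab.subset)
    ((mhat_subset_mhat_iff hp).1 hab.symm.subset)

lemma exists_mhat_eq_of_isUpperCm {U : Set (A → A → Prop)} (hU : IsUpperCm star U) :
    ∃ a : A, Mhat star a = U := by
  classical
  have := Fintype.ofFinite A
  let L : LowerSet {q : A // SupIrred q} :=
    { carrier := {q | ∃ μ ∈ U, ∀ x, μ x ⊤ ↔ q.1 ≤ x}
      lower' := by
        rintro q ⟨r, hr⟩ (hrq : r ≤ q) ⟨μ, hμU, hμ⟩
        obtain ⟨ν, hν, hνr⟩ := exists_isCMI_top_iff_of_supPrime hp (supPrime_iff_supIrred.2 hr)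
        exact ⟨ν, hU.2 μ hμU ν hν fun x hx => (hνr x).2 (hrq.trans ((hμ x).1 hx)), hνr⟩ }
  obtain ⟨a, ha⟩ := OrderIso.lowerSetSupIrred.surjective L
  refine ⟨a, Set.ext fun μ => ⟨fun ⟨h, hμa⟩ => ?_, fun hμU => ?_⟩⟩
  · obtain ⟨q, hq, hμq⟩ := h.exists_supPrime_top_iff hp
    obtain ⟨ν, hνU, hν⟩ : (⟨q, hq.supIrred⟩ : {q : A // SupIrred q}) ∈ L :=
      ha ▸ (hμq a).1 hμa
    exact hU.2 ν hνU μ h fun x hx => (hμq x).2 ((hν x).1 hx)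
  · have h := hU.1 hμU
    obtain ⟨q, hq, hμq⟩ := h.exists_supPrime_top_iff hp
    have hqa : (⟨q, hq.supIrred⟩ : {q : A // SupIrred q}) ∈ OrderIso.lowerSetSupIrred a :=
      ha ▸ ⟨μ, hμU, hμq⟩
    exact ⟨h, (hμq a).2 hqa⟩

lemma mhat_star (a : A) :
    Mhat star (star a) = {μ | IsCMI star μ ∧ ¬ ∃ ν ∈ Mhat star a, leC μ ν} := by
  ext μ
  refine ⟨fun ⟨h, hμ⟩ => ⟨h, ?_⟩, fun ⟨h, hμ⟩ => ⟨h, ?_⟩⟩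
  · rintro ⟨ν, ⟨hν, hνa⟩, hμν⟩
    exact hν.not_bot_top (hp.star_inf_self a ▸ hν.1.inf_top (hμν hμ) hνa)
  · obtain ⟨q, -, hμq⟩ := h.exists_supPrime_top_iff hp
    refine (hμq _).2 ((hp q a).1 (by_contra fun hqa => ?_))
    obtain ⟨r, hr, hrqa⟩ := exists_supIrred_le_of_ne_bot hqa
    obtain ⟨ν, hν, hνr⟩ := exists_isCMI_top_iff_of_supPrime hp (supPrime_iff_supIrred.2 hr)
    exact hμ ⟨ν, ⟨hν, (hνr a).2 (hrqa.trans inf_le_right)⟩,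
      fun x hx => (hνr x).2 ((hrqa.trans inf_le_left).trans ((hμq x).1 hx))⟩

end Mhat

/-- A finite p-algebra `A` is isomorphic, via `a ↦ M̂(a)`, to the p-algebra of upper
sets of its poset of completely meet-irreducible congruences ordered by `≤꜀`
(inclusion of `⊤`-classes). -/
theorem stmt11 [DistribLattice A] [BoundedOrder A] [Finite A] (star : A → A)
    (hp : ∀ x y : A, x ⊓ y = ⊥ ↔ x ≤ star y) :
    (∀ a : A, IsUpperCm star (Mhat star a)) ∧
    (∀ a b : A, Mhat star a = Mhat star b → a = b) ∧
    (∀ U : Set (A → A → Prop), IsUpperCm star U → ∃ a : A, Mhat star a = U) ∧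
    (∀ a b : A, Mhat star (a ⊓ b) = Mhat star a ∩ Mhat star b) ∧
    (∀ a b : A, Mhat star (a ⊔ b) = Mhat star a ∪ Mhat star b) ∧
    Mhat star (⊥ : A) = ∅ ∧
    Mhat star (⊤ : A) = {μ : A → A → Prop | IsCMI star μ} ∧
    (∀ a : A, Mhat star (star a) =
      {μ : A → A → Prop | IsCMI star μ ∧ ¬ ∃ ν ∈ Mhat star a, leC μ ν}) :=
  ⟨isUpperCm_mhat, fun _ _ h => mhat_injective hp h, fun _ => exists_mhat_eq_of_isUpperCm hp,
    mhat_inf, mhat_sup hp, mhat_bot, mhat_top, mhat_star hp⟩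
end

section
/- Let A be a finite p-algebra. For each completely meet-irreducible congruence μ on A, the infimum p of the ⊤-class of μ is a join-irreducible element of A and the ⊤-class of μ equals {x ∈ A : p ≤ x}; moreover the map μ ↦ p is a bijection from the set of completely meet-irreducible congruences of A onto the set of join-irreducible elements of A, and it is order-inverting in the sense that the ⊤-class of μ is contained in the ⊤-class of ν if and only if the element associated to ν is ≤ the element associated to μ. -/
/-!
For a join-irreducible `x` with lower cover `x⁻` (the join of everything strictly below
`x`), let `ν x` relate `a` and `b` when `x`, and each atom below `x`, lies below both or
neither. All these elements are join-prime, and `x ≤ a*` holds exactly when no atom below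
`x` lies below `a`, so `ν x` is a congruence; its `⊤`-class is `↑x`, and it is the largest
congruence not collapsing `x` to `x⁻`. A join-compatible equivalence that collapses every
`q` to `q⁻` for the join-irreducibles `q ≤ e` with `q ≰ c` relates `e` to `c`; hence every
congruence `μ` is the intersection of the `ν x` above it, so a completely meet-irreducible
`μ` is some `ν x`, and conversely each `ν x` is completely meet-irreducible.
-/

variable {A : Type*}

section LowerPart

variable [SemilatticeSup A] [OrderBot A] [Finite A]

noncomputable def lowerPart (x : A) : A := (Set.toFinite (Set.Iio x)).toFinset.sup id

lemma le_lowerPart_of_lt {x y : A} (h : y < x) : y ≤ lowerPart x :=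
  Finset.le_sup (f := id) ((Set.Finite.mem_toFinset _).2 h)

lemma lowerPart_le (x : A) : lowerPart x ≤ x :=
  Finset.sup_le fun _ hy => ((Set.Finite.mem_toFinset _).1 hy).le

lemma SupIrred.lowerPart_lt {x : A} (hx : SupIrred x) : lowerPart x < x := by
  refine (lowerPart_le x).lt_of_ne fun h => ?_
  obtain ⟨y, hy, hyx⟩ := hx.finset_sup_eq h
  exact ((Set.Finite.mem_toFinset _).1 hy).ne hyx

lemma rel_sup_of_collapse {θ : A → A → Prop} (hθ : Equivalence θ)
    (hsup : ∀ a b c d : A, θ a b → θ c d → θ (a ⊔ c) (b ⊔ d)) {c e : A}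
    (hcoll : ∀ q ≤ e, SupIrred q → ¬ q ≤ c → θ q (lowerPart q)) :
    ∀ x ≤ e, θ (c ⊔ x) c := by
  intro x
  induction x using WellFoundedLT.induction with
  | _ x ih =>
    intro hxe
    by_cases hxc : x ≤ c
    · rw [sup_eq_left.2 hxc]
      exact hθ.refl c
    by_cases hx : SupIrred x
    · exact hθ.trans (hsup _ _ _ _ (hθ.refl c) (hcoll x hxe hx hxc))
        (ih _ hx.lowerPart_lt ((lowerPart_le x).trans hxe))
    obtain hmin | ⟨y, z, rfl, hy, hz⟩ := not_supIrred.1 hx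
    · exact absurd (hmin.eq_bot ▸ bot_le) hxc
    · have := hsup _ _ _ _ (ih y hy (hy.le.trans hxe)) (ih z hz (hz.le.trans hxe))
      rwa [← sup_sup_distrib_left, sup_idem] at this

end LowerPart

lemma IsAtom.supPrime [DistribLattice A] [OrderBot A] {t : A} (ht : IsAtom t) : SupPrime t := by
  refine ⟨fun hmin => ht.1 hmin.eq_bot, fun b c => ?_⟩
  simp only [← ht.not_disjoint_iff_le, disjoint_sup_right, not_and_or, imp_self]

section PseudoComplement

variable [Lattice A] [BoundedOrder A] {star : A → A}
  (hp : ∀ x y : A, x ⊓ y = ⊥ ↔ x ≤ star y)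
include hp

lemma star_bot_eq_top : star ⊥ = ⊤ :=
  top_le_iff.1 ((hp ⊤ ⊥).1 (inf_bot_eq ⊤))

lemma IsAtom.le_star_iff {t a : A} (ht : IsAtom t) : t ≤ star a ↔ ¬ t ≤ a := by
  rw [← hp, ht.not_le_iff_disjoint, disjoint_iff]

lemma le_star_iff_forall_atom [IsAtomic A] {x a : A} :
    x ≤ star a ↔ ∀ t, IsAtom t → t ≤ x → ¬ t ≤ a := by
  rw [← hp]
  refine ⟨fun h t ht htx hta => ht.1 (le_bot_iff.1 (h ▸ le_inf htx hta)), fun h => ?_⟩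
  obtain hbot | ⟨t, ht, hle⟩ := eq_bot_or_exists_atom_le (x ⊓ a)
  · exact hbot
  · exact (h t ht (hle.trans inf_le_left) (hle.trans inf_le_right)).elim

end PseudoComplement

section Congruence

variable [DistribLattice A] [BoundedOrder A]

/-- The congruence `ν x`. -/
def cmiOf (x : A) (a b : A) : Prop :=
  ∀ p ≤ x, (p = x ∨ IsAtom p) → (p ≤ a ↔ p ≤ b)

lemma topClass_cmiOf (x : A) : {a : A | cmiOf x a ⊤} = Set.Ici x :=
  Set.ext fun _ => ⟨fun h => (h x le_rfl (Or.inl rfl)).2 le_top,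
    fun h _ hpx _ => iff_of_true (hpx.trans h) le_top⟩

variable [Finite A] {star : A → A} (hp : ∀ x y : A, x ⊓ y = ⊥ ↔ x ≤ star y)

lemma not_cmiOf_lowerPart {x : A} (hx : SupIrred x) : ¬ cmiOf x x (lowerPart x) :=
  fun h => hx.lowerPart_lt.not_ge ((h x le_rfl (Or.inl rfl)).1 le_rfl)

include hp

lemma isPCong_cmiOf {x : A} (hx : SupIrred x) : IsPCong star (cmiOf x) := by
  refine ⟨⟨fun a p _ _ => Iff.rfl, fun h p hpx hq => (h p hpx hq).symm,
    fun h h' p hpx hq => (h p hpx hq).trans (h' p hpx hq)⟩, ?_, ?_, ?_⟩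
  · intro a b c d h h' p hpx hq
    simp only [le_inf_iff, h p hpx hq, h' p hpx hq]
  · intro a b c d h h' p hpx hq
    have hprime : SupPrime p := by
      rcases hq with rfl | ht
      exacts [hx.supPrime, ht.supPrime]
    simp only [hprime.le_sup, h p hpx hq, h' p hpx hq]
  · intro a b h p hpx hq
    rcases hq with rfl | ht
    · simp only [le_star_iff_forall_atom hp]
      exact forall_congr' fun t => imp_congr_right fun ht => imp_congr_right fun htx =>
        not_congr (h t htx (Or.inr ht))
    · rw [ht.le_star_iff hp, ht.le_star_iff hp, h p hpx (Or.inr ht)]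

lemma IsPCong.le_cmiOf_iff {θ : A → A → Prop} (hθ : IsPCong star θ) {x : A}
    (hx : SupIrred x) : θ ≤ cmiOf x ↔ ¬ θ x (lowerPart x) := by
  refine ⟨fun hle hθx => not_cmiOf_lowerPart hx (hle _ _ hθx), fun hsep => ?_⟩
  obtain ⟨hequiv, hinf, hsup, hstar⟩ := hθ
  have no_collapse : ∀ z < x, ¬ θ x z := fun z hz hxz => hsep <| by
    simpa [sup_eq_left.2 (lowerPart_le x), sup_eq_right.2 (le_lowerPart_of_lt hz)] using
      hsup _ _ _ _ hxz (hequiv.refl (lowerPart x))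
  have up_x : ∀ a b, θ a b → x ≤ a → x ≤ b := by
    intro a b hab hxa
    by_contra hxb
    refine no_collapse (b ⊓ x) (inf_le_right.lt_of_ne fun h => hxb (h ▸ inf_le_left)) ?_
    simpa [inf_eq_right.2 hxa] using hinf _ _ _ _ hab (hequiv.refl x)
  have up_atom : ∀ a b, θ a b → ∀ t ≤ x, IsAtom t → t ≤ a → t ≤ b := by
    intro a b hab t htx ht hta
    by_contra htb
    have htbot : θ t ⊥ := by
      simpa [inf_eq_right.2 hta, inf_comm b, (ht.not_le_iff_disjoint.1 htb).eq_bot] using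
        hinf _ _ _ _ hab (hequiv.refl t)
    -- `t ≤ x` collapses to `⊥`, so `x` collapses to `x ⊓ t*`, which lies strictly below `x`
    refine no_collapse (x ⊓ star t) (inf_le_left.lt_of_ne fun h => ?_) ?_
    · exact (ht.le_star_iff hp).1 (htx.trans (h ▸ inf_le_right)) le_rfl
    · have hxt := hinf _ _ _ _ (hequiv.refl x) (hstar _ _ htbot)
      rw [star_bot_eq_top hp, inf_top_eq] at hxt
      exact hequiv.symm hxt
  intro a b hab p hpx hq
  rcases hq with rfl | ht
  · exact ⟨up_x a b hab, up_x b a (hequiv.symm hab)⟩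
  · exact ⟨up_atom a b hab p hpx ht, up_atom b a (hequiv.symm hab) p hpx ht⟩

lemma IsPCong.rel_iff_forall_cmiOf {μ : A → A → Prop} (hμ : IsPCong star μ) {a b : A} :
    μ a b ↔ ∀ x, SupIrred x → μ ≤ cmiOf x → cmiOf x a b := by
  refine ⟨fun hab x _ hle => hle a b hab, fun h => ?_⟩
  have rel_inf : ∀ {a b : A}, (∀ x, SupIrred x → μ ≤ cmiOf x → cmiOf x a b) →
      μ a (a ⊓ b) := by
    intro a b h
    have := rel_sup_of_collapse hμ.1 hμ.2.2.1 (c := a ⊓ b) (e := a)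
      (fun q hqa hq hqab => ?_) a le_rfl
    · rwa [sup_eq_right.2 inf_le_left] at this
    by_contra hsep
    have hqb := (h q hq ((hμ.le_cmiOf_iff hp hq).2 hsep) q le_rfl (Or.inl rfl)).1 hqa
    exact hqab (le_inf hqa hqb)
  have hb : μ b (b ⊓ a) := rel_inf fun x hx hle => (isPCong_cmiOf hp hx).1.symm (h x hx hle)
  exact hμ.1.trans (rel_inf h) (inf_comm b a ▸ hμ.1.symm hb)

end Congruence

section CompletelyMeetIrreducible

variable [DistribLattice A] [BoundedOrder A] [Finite A] {star : A → A}
  (hp : ∀ x y : A, x ⊓ y = ⊥ ↔ x ≤ star y)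
include hp

lemma IsCMI.exists_eq_cmiOf {μ : A → A → Prop} (hμ : IsCMI star μ) :
    ∃ x, SupIrred x ∧ μ = cmiOf x := by
  obtain ⟨x, hx, -, hμx⟩ := hμ.2 {θ | ∃ x, SupIrred x ∧ μ ≤ cmiOf x ∧ θ = cmiOf x}
    (by rintro _ ⟨x, hx, -, rfl⟩; exact isPCong_cmiOf hp hx)
    (by
      funext a b
      refine propext ((hμ.1.rel_iff_forall_cmiOf hp).trans ⟨?_, ?_⟩)
      · rintro h _ ⟨x, hx, hle, rfl⟩
        exact h x hx hle
      · exact fun h x hx hle => h _ ⟨x, hx, hle, rfl⟩)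
  exact ⟨x, hx, hμx⟩

lemma isCMI_cmiOf {x : A} (hx : SupIrred x) : IsCMI star (cmiOf x) := by
  refine ⟨isPCong_cmiOf hp hx, fun S hS hinter => ?_⟩
  by_contra hnot
  have collapse : ∀ θ ∈ S, θ x (lowerPart x) := by
    intro θ hθ
    by_contra hsep
    have hge : cmiOf x ≤ θ := by
      rw [hinter]
      exact fun a b hab => hab θ hθ
    exact hnot (le_antisymm (((hS θ hθ).le_cmiOf_iff hp hx).2 hsep) hge ▸ hθ)
  apply not_cmiOf_lowerPart hx
  rw [hinter]
  exact collapse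

end CompletelyMeetIrreducible

noncomputable def topClassGLB [Preorder A] [Top A] [Nonempty A] (μ : A → A → Prop) : A :=
  Classical.epsilon (IsGLB {a | μ a ⊤})

lemma topClassGLB_cmiOf [DistribLattice A] [BoundedOrder A] (x : A) :
    topClassGLB (cmiOf x) = x := by
  have hx : IsGLB {a | cmiOf x a ⊤} x := topClass_cmiOf x ▸ isGLB_Ici
  exact (Classical.epsilon_spec ⟨x, hx⟩).unique hx

/-- In a finite p-algebra, sending a completely meet-irreducible congruence `μ` to the
infimum `p` of its `⊤`-class gives a join-irreducible element with `⊤`-class `= Ici p`;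
this assignment is a bijection from the completely meet-irreducible congruences onto
the join-irreducible elements, and it inverts the order given by inclusion of
`⊤`-classes. -/
theorem stmt12 [DistribLattice A] [BoundedOrder A] [Finite A] (star : A → A)
    (hp : ∀ x y : A, x ⊓ y = ⊥ ↔ x ≤ star y) :
    ∃ f : (A → A → Prop) → A,
      (∀ μ : A → A → Prop, IsCMI star μ →
        IsGLB {a : A | μ a ⊤} (f μ) ∧ SupIrred (f μ) ∧ {a : A | μ a ⊤} = Set.Ici (f μ)) ∧
      (∀ μ ν : A → A → Prop, IsCMI star μ → IsCMI star ν → f μ = f ν → μ = ν) ∧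
      (∀ p : A, SupIrred p → ∃ μ : A → A → Prop, IsCMI star μ ∧ f μ = p) ∧
      (∀ μ ν : A → A → Prop, IsCMI star μ → IsCMI star ν →
        ({a : A | μ a ⊤} ⊆ {a : A | ν a ⊤} ↔ f ν ≤ f μ)) := by
  refine ⟨topClassGLB, fun μ hμ => ?_, fun μ ν hμ hν hf => ?_,
    fun p hpirr => ⟨cmiOf p, isCMI_cmiOf hp hpirr, topClassGLB_cmiOf p⟩,
    fun μ ν hμ hν => ?_⟩
  · obtain ⟨x, hx, rfl⟩ := hμ.exists_eq_cmiOf hp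
    rw [topClassGLB_cmiOf, topClass_cmiOf]
    exact ⟨isGLB_Ici, hx, rfl⟩
  · obtain ⟨x, -, rfl⟩ := hμ.exists_eq_cmiOf hp
    obtain ⟨y, -, rfl⟩ := hν.exists_eq_cmiOf hp
    rw [topClassGLB_cmiOf, topClassGLB_cmiOf] at hf
    rw [hf]
  · obtain ⟨x, -, rfl⟩ := hμ.exists_eq_cmiOf hp
    obtain ⟨y, -, rfl⟩ := hν.exists_eq_cmiOf hp
    rw [topClass_cmiOf, topClass_cmiOf, topClassGLB_cmiOf, topClassGLB_cmiOf,
      Set.Ici_subset_Ici]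
end

section
/- Let A be a finite p-algebra and μ a completely meet-irreducible congruence on A. Then μ has exactly two equivalence classes if and only if the ⊤-class of μ equals the principal filter {x ∈ A : a ≤ x} of some atom a of A. -/
variable {A : Type*}

/-!
The `⊤`-class of a congruence `θ` is a filter, hence in a finite lattice it is `[a)` for some
`a`. If `θ` has two classes, the other one contains `⊥`; for `b < a` this gives `θ b ⊥`, so
`θ b* ⊤`, i.e. `b ≤ a ≤ b*`, and `b = b ⊓ b* = ⊥`: thus `a` is an atom. Conversely, if `a` is an
atom then every `c ∉ [a)` satisfies `c ⊓ a = ⊥`, so `c = c ⊓ ⊤ θ c ⊓ a = ⊥`.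
-/

theorem HasTwoClasses.rel_of_not_rel {θ : A → A → Prop} (h : HasTwoClasses θ)
    (hθ : Equivalence θ) {x y z : A} (hx : ¬ θ x z) (hy : ¬ θ y z) : θ x y := by
  obtain ⟨a, b, -, hab⟩ := h
  have other : ∀ {w c d}, θ z c → ¬ θ w z → θ w c ∨ θ w d → θ w d := fun hzc hw h =>
    h.resolve_left fun hwc => hw (hθ.trans hwc (hθ.symm hzc))
  rcases hab z with hz | hz
  · exact hθ.trans (other hz hx (hab x)) (hθ.symm (other hz hy (hab y)))
  · exact hθ.trans (other hz hx (hab x).symm) (hθ.symm (other hz hy (hab y).symm))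

namespace IsPCong

variable [Lattice A] {star : A → A} {θ : A → A → Prop}

section OrderTop

variable [OrderTop A]

theorem rel_top_of_le (hθ : IsPCong star θ) {x y : A} (hx : θ x ⊤) (hxy : x ≤ y) : θ y ⊤ := by
  simpa [sup_eq_right.mpr hxy] using hθ.2.2.1 x ⊤ y y hx (hθ.1.refl y)

theorem inf_rel_top (hθ : IsPCong star θ) {x y : A} (hx : θ x ⊤) (hy : θ y ⊤) :
    θ (x ⊓ y) ⊤ := by
  simpa using hθ.2.1 x ⊤ y ⊤ hx hy

theorem exists_setOf_rel_top_eq_Ici [Finite A] (hθ : IsPCong star θ) :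
    ∃ a : A, {x | θ x ⊤} = Set.Ici a := by
  have hfin : {x | θ x ⊤}.Finite := Set.toFinite _
  refine ⟨hfin.toFinset.inf id, Set.Subset.antisymm
    (fun x hx => Finset.inf_le (hfin.mem_toFinset.mpr hx)) fun x hx => ?_⟩
  refine hθ.rel_top_of_le (Finset.inf_mem {x | θ x ⊤} (hθ.1.refl ⊤) ?_ _ _ ?_) hx
  · exact fun x hx y hy => hθ.inf_rel_top hx hy
  · exact fun x hx => hfin.mem_toFinset.mp hx

end OrderTop

section BoundedOrder

variable [BoundedOrder A]

theorem rel_bot_of_inf_eq_bot (hθ : IsPCong star θ) {a c : A} (ha : θ a ⊤)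
    (hac : a ⊓ c = ⊥) : θ c ⊥ := by
  simpa [hac] using hθ.1.symm (hθ.2.1 a ⊤ c c ha (hθ.1.refl c))

theorem rel_of_bot_rel_top (hθ : IsPCong star θ) (h : θ ⊥ ⊤) (x y : A) : θ x y := by
  have hbot : ∀ c, θ c ⊥ := fun c => by
    simpa using hθ.2.1 c c ⊤ ⊥ (hθ.1.refl c) (hθ.1.symm h)
  exact hθ.1.trans (hbot x) (hθ.1.symm (hbot y))

theorem eq_bot_of_rel_bot (hθ : IsPCong star θ) (hp : ∀ x y : A, x ⊓ y = ⊥ ↔ x ≤ star y)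
    {a b : A} (ha : {x | θ x ⊤} = Set.Ici a) (hba : b ≤ a) (hb : θ b ⊥) : b = ⊥ := by
  have hstar_bot : star (⊥ : A) = ⊤ := top_le_iff.mp ((hp ⊤ ⊥).mp (inf_bot_eq _))
  have hab : a ≤ star b := by
    have : star b ∈ {x | θ x ⊤} := by simpa [hstar_bot] using hθ.2.2.2 b ⊥ hb
    rwa [ha] at this
  simpa using (hp b b).mpr (hba.trans hab)

theorem hasTwoClasses_iff_isAtom (hθ : IsPCong star θ)
    (hp : ∀ x y : A, x ⊓ y = ⊥ ↔ x ≤ star y) {a : A} (ha : {x | θ x ⊤} = Set.Ici a) :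
    HasTwoClasses θ ↔ IsAtom a := by
  have mem : ∀ {x}, θ x ⊤ ↔ a ≤ x := fun {x} => Set.ext_iff.mp ha x
  constructor
  · intro h
    have hbot : ¬ θ ⊥ ⊤ := fun hb => by
      obtain ⟨x, y, hxy, -⟩ := h
      exact hxy (hθ.rel_of_bot_rel_top hb x y)
    refine ⟨fun ha0 => hbot (mem.mpr ha0.le), fun b hb => hθ.eq_bot_of_rel_bot hp ha hb.le ?_⟩
    exact h.rel_of_not_rel hθ.1 (fun hbt => hb.not_ge (mem.mp hbt)) hbot
  · intro hatom
    refine ⟨⊤, ⊥, fun h => hatom.1 (le_bot_iff.mp (mem.mp (hθ.1.symm h))), fun c => ?_⟩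
    by_cases hc : a ≤ c
    · exact .inl (mem.mpr hc)
    · exact .inr <| hθ.rel_bot_of_inf_eq_bot (mem.mpr le_rfl)
        (disjoint_iff.mp (hatom.not_le_iff_disjoint.mp hc))

end BoundedOrder

end IsPCong

/-- In a finite p-algebra, a completely meet-irreducible congruence has exactly two
classes iff its `⊤`-class is the principal filter of an atom. -/
theorem stmt14 [DistribLattice A] [BoundedOrder A] [Finite A] (star : A → A)
    (hp : ∀ x y : A, x ⊓ y = ⊥ ↔ x ≤ star y)
    (μ : A → A → Prop) (hμ : IsCMI star μ) :
    HasTwoClasses μ ↔ ∃ a : A, IsAtom a ∧ {x : A | μ x ⊤} = Set.Ici a := by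
  obtain ⟨a, ha⟩ := hμ.1.exists_setOf_rel_top_eq_Ici
  rw [hμ.1.hasTwoClasses_iff_isAtom hp ha]
  refine ⟨fun hatom => ⟨a, hatom, ha⟩, ?_⟩
  rintro ⟨b, hb, hb'⟩
  rwa [Set.Ici_inj.mp (ha.symm.trans hb')]
end

section
/- Let A be a finite p-algebra and let a ∈ A be an atom. Then there is exactly one completely meet-irreducible congruence μ on A with a μ ⊤. -/
variable {A : Type*}

/-- In a finite p-algebra, for every atom `a` there is exactly one completely
meet-irreducible congruence relating `a` to `⊤`. -/
theorem stmt15 [DistribLattice A] [BoundedOrder A] [Finite A] (star : A → A)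
    (hp : ∀ x y : A, x ⊓ y = ⊥ ↔ x ≤ star y)
    (a : A) (ha : IsAtom a) :
    ∃! μ : A → A → Prop, IsCMI star μ ∧ μ a ⊤ := by
  classical
  have hne : a ≠ ⊥ := ha.1
  have hdich : ∀ x : A, a ≤ x ∨ a ⊓ x = ⊥ := by
    intro x
    rcases eq_or_lt_of_le (inf_le_left : a ⊓ x ≤ a) with h | h
    · left; exact (le_of_eq h.symm).trans inf_le_right
    · right; exact ha.2 _ h
  have hstar : ∀ x : A, a ≤ star x ↔ ¬ a ≤ x := by
    intro x
    constructor
    · intro h hx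
      have hb : a ⊓ x = ⊥ := (hp a x).mpr h
      rw [inf_eq_left.mpr hx] at hb
      exact hne hb
    · intro hx
      exact (hp a x).mp ((hdich x).resolve_left hx)
  have hprime : ∀ x y : A, a ≤ x ⊔ y → a ≤ x ∨ a ≤ y := by
    intro x y hxy
    by_contra hc
    push_neg at hc
    have hx : a ⊓ x = ⊥ := (hdich x).resolve_left hc.1
    have hy : a ⊓ y = ⊥ := (hdich y).resolve_left hc.2
    apply hne
    calc a = a ⊓ (x ⊔ y) := (inf_eq_left.mpr hxy).symm
      _ = (a ⊓ x) ⊔ (a ⊓ y) := inf_sup_left a x y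
      _ = ⊥ := by rw [hx, hy, sup_idem]
  have hsup : ∀ x y : A, a ≤ x ⊔ y ↔ a ≤ x ∨ a ≤ y := by
    intro x y
    exact ⟨hprime x y, fun h => h.elim (fun h => h.trans le_sup_left)
      (fun h => h.trans le_sup_right)⟩
  set μ : A → A → Prop := fun x y => (a ≤ x ↔ a ≤ y) with hμdef
  have hμcong : IsPCong star μ := by
    refine ⟨⟨fun x => Iff.rfl, fun h => h.symm, fun h1 h2 => h1.trans h2⟩,
      ?_, ?_, ?_⟩
    · intro x y u v h1 h2
      show a ≤ x ⊓ u ↔ a ≤ y ⊓ v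
      simp only [le_inf_iff]
      exact and_congr h1 h2
    · intro x y u v h1 h2
      show a ≤ x ⊔ u ↔ a ≤ y ⊔ v
      rw [hsup, hsup]
      exact or_congr h1 h2
    · intro x y h
      show a ≤ star x ↔ a ≤ star y
      rw [hstar, hstar]
      exact not_congr h
  have hmusa : μ (star a) ⊥ := by
    constructor
    · intro h; exact absurd le_rfl ((hstar a).mp h)
    · intro h; exact absurd (le_bot_iff.mp h) hne
  have hsb : star ⊥ = ⊤ := le_antisymm le_top ((hp ⊤ ⊥).mp (inf_bot_eq ⊤))
  have hkey : ∀ θ : A → A → Prop, IsPCong star θ → (∀ u v, μ u v → θ u v) →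
      ∀ x y, θ x y → ¬ (a ≤ x ↔ a ≤ y) → θ ⊥ ⊤ := by
    intro θ hθ hle x y hxy hnot
    obtain ⟨heq, hmeet, hjoin, hstarc⟩ := hθ
    have main : ∀ x y, θ x y → a ≤ x → ¬ a ≤ y → θ ⊥ ⊤ := by
      intro x y hxy hax hay
      have h1 : θ (a ⊓ x) (a ⊓ y) := hmeet _ _ _ _ (heq.refl a) hxy
      rw [inf_eq_left.mpr hax, (hdich y).resolve_left hay] at h1
      have h3 : θ (star a) (star ⊥) := hstarc _ _ h1
      rw [hsb] at h3
      have h4 : θ (star a) ⊥ := hle _ _ hmusa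
      exact heq.trans (heq.symm h4) h3
    rcases Classical.em (a ≤ x) with hx | hx
    · have hy : ¬ a ≤ y := fun hy => hnot ⟨fun _ => hy, fun _ => hx⟩
      exact main x y hxy hx hy
    · have hy : a ≤ y := by
        by_contra hy
        exact hnot ⟨fun h => absurd h hx, fun h => absurd h hy⟩
      exact main y x (heq.symm hxy) hy hx
  refine ⟨μ, ⟨⟨hμcong, ?_⟩, ⟨fun _ => le_top, fun _ => le_rfl⟩⟩, ?_⟩
  · intro S hS hEq
    have hμbot : ¬ μ ⊥ ⊤ := fun h => hne (le_bot_iff.mp (h.mpr le_top))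
    have hex : ∃ θ ∈ S, ¬ θ ⊥ ⊤ := by
      by_contra hc
      push_neg at hc
      apply hμbot
      show μ ⊥ ⊤
      rw [hEq]
      exact fun θ hθ => hc θ hθ
    obtain ⟨θ, hθS, hθbot⟩ := hex
    have hle : ∀ u v, μ u v → θ u v := by
      intro u v h
      have h2 : (fun a b => ∀ θ ∈ S, θ a b) u v := hEq ▸ h
      exact h2 θ hθS
    have hθeq : μ = θ := by
      funext u v
      apply propext
      constructor
      · exact hle u v
      · intro huv
        by_contra hnot
        exact hθbot (hkey θ (hS θ hθS) hle u v huv hnot)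
    exact hθeq ▸ hθS
  · rintro ν ⟨⟨hνcong, hνCMI⟩, hνa⟩
    have hνc := hνcong
    obtain ⟨heq, hmeet, hjoin, hstarc⟩ := hνcong
    have htopc : ∀ x, a ≤ x → ν x ⊤ := by
      intro x hx
      have h := hjoin x x a ⊤ (heq.refl x) hνa
      rwa [sup_eq_left.mpr hx, sup_top_eq] at h
    have hbotc : ∀ x, ¬ a ≤ x → ν x ⊥ := by
      intro x hx
      have h := hmeet x x a ⊤ (heq.refl x) hνa
      rw [inf_top_eq, inf_comm x a, (hdich x).resolve_left hx] at h
      exact heq.symm h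
    have hle : ∀ u v, μ u v → ν u v := by
      intro u v h
      rcases Classical.em (a ≤ u) with hu | hu
      · exact heq.trans (htopc u hu) (heq.symm (htopc v (h.mp hu)))
      · exact heq.trans (hbotc u hu) (heq.symm (hbotc v (fun hv => hu (h.mpr hv))))
    have hnottot : ¬ ν ⊥ ⊤ := by
      intro hbt
      have htot : ∀ u v : A, ν u v := by
        have hall : ∀ u : A, ν u ⊤ := by
          intro u
          have h := hjoin u u ⊥ ⊤ (heq.refl u) hbt
          rwa [sup_bot_eq, sup_top_eq] at h
        intro u v
        exact heq.trans (hall u) (heq.symm (hall v))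
      have hEq0 : ν = fun u v => ∀ θ ∈ (∅ : Set (A → A → Prop)), θ u v := by
        funext u v
        exact propext ⟨fun _ θ hθ => absurd hθ (Set.notMem_empty θ),
          fun _ => htot u v⟩
      exact absurd (hνCMI ∅ (fun θ h => absurd h (Set.notMem_empty θ)) hEq0)
        (Set.notMem_empty ν)
    funext u v
    apply propext
    constructor
    · intro huv
      by_contra hnot
      exact hnottot (hkey ν hνc hle u v huv hnot)
    · exact hle u v
end

section
/- Let A be a p-algebra and μ a completely meet-irreducible congruence on A. Then μ contains the Glivenko relation (that is, for all x, y ∈ A, x** = y** implies x μ y) if and only if μ has exactly two equivalence classes. -/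
variable {A : Type*}

namespace IsPseudocomplement

section Lattice

variable [Lattice A] [OrderBot A] {star : A → A} (hp : IsPseudocomplement star)
include hp

lemma star_inf_self_s16 (x : A) : star x ⊓ x = ⊥ := (hp _ _).2 le_rfl

lemma inf_star_self (x : A) : x ⊓ star x = ⊥ := by
  rw [inf_comm, hp.star_inf_self_s16]

lemma le_star_star (x : A) : x ≤ star (star x) := (hp _ _).1 (hp.inf_star_self x)

lemma star_anti {x y : A} (h : x ≤ y) : star y ≤ star x :=
  (hp _ _).1 (le_bot_iff.1 ((inf_le_inf_left _ h).trans_eq (hp.star_inf_self_s16 y)))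

lemma star_star_star (x : A) : star (star (star x)) = star x :=
  le_antisymm (hp.star_anti (hp.le_star_star x)) (hp.le_star_star (star x))

lemma star_sup_star_self (x : A) : star (x ⊔ star x) = ⊥ :=
  le_bot_iff.1 <| (le_inf (hp.star_anti le_sup_left) (hp.star_anti le_sup_right)).trans_eq
    (hp.inf_star_self (star x))

lemma star_inf_inf_right (x d : A) : star (x ⊓ d) ⊓ d = star x ⊓ d := by
  refine le_antisymm (le_inf ((hp _ _).1 ?_) inf_le_right)
    (inf_le_inf_right _ (hp.star_anti inf_le_left))
  rw [inf_assoc, inf_comm d, hp.star_inf_self_s16]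

end Lattice

variable [Lattice A] [BoundedOrder A] {star : A → A} (hp : IsPseudocomplement star)
include hp

lemma star_bot : star (⊥ : A) = ⊤ := top_le_iff.1 ((hp ⊤ ⊥).1 (inf_bot_eq ⊤))

lemma star_top : star (⊤ : A) = ⊥ := by
  simpa using hp.star_inf_self_s16 ⊤

end IsPseudocomplement

lemma HasTwoClasses.rel_or_rel {r : A → A → Prop} (h : HasTwoClasses r) (hr : Equivalence r)
    {u v : A} (huv : ¬ r u v) (c : A) : r c u ∨ r c v := by
  obtain ⟨a, b, hab, hclass⟩ := h
  have ⟨_, hsymm, htrans⟩ := hr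
  rcases hclass c with hc | hc <;> rcases hclass u with hu | hu <;>
    rcases hclass v with hv | hv <;> grind

namespace IsPCong

variable {star : A → A} {μ : A → A → Prop}

lemma rel_of_rel_bot_top [Lattice A] [BoundedOrder A] (hμ : IsPCong star μ) (h : μ ⊥ ⊤)
    (x y : A) : μ x y := by
  have h_bot_rel : ∀ z, μ ⊥ z := fun z => by
    simpa using hμ.2.1 _ _ _ _ (hμ.1.refl z) h
  exact hμ.1.trans (hμ.1.symm (h_bot_rel x)) (h_bot_rel y)

lemma hasTwoClasses_iff [Lattice A] [BoundedOrder A] (hμ : IsPCong star μ) :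
    HasTwoClasses μ ↔ ¬ μ ⊥ ⊤ ∧ ∀ c, μ c ⊥ ∨ μ c ⊤ := by
  refine ⟨fun h => ?_, fun ⟨hbt, hclass⟩ => ⟨⊥, ⊤, hbt, hclass⟩⟩
  have hbt : ¬ μ ⊥ ⊤ := fun hbt =>
    let ⟨a, b, hab, _⟩ := h
    hab (hμ.rel_of_rel_bot_top hbt a b)
  exact ⟨hbt, h.rel_or_rel hμ.1 hbt⟩

lemma rel_of_star_star_eq [Lattice A] [BoundedOrder A] (hp : IsPseudocomplement star)
    (hμ : IsPCong star μ) (hbt : ¬ μ ⊥ ⊤) (hclass : ∀ c, μ c ⊥ ∨ μ c ⊤) {x y : A}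
    (h : star (star x) = star (star y)) : μ x y := by
  obtain ⟨⟨-, hsymm, htrans⟩, -, -, hstar⟩ := hμ
  have hbot (c : A) (hc : μ c ⊥) : μ (star (star c)) ⊥ := by
    simpa only [hp.star_bot, hp.star_top] using hstar _ _ (hstar _ _ hc)
  have htop (c : A) (hc : μ c ⊤) : μ (star (star c)) ⊤ := by
    simpa only [hp.star_bot, hp.star_top] using hstar _ _ (hstar _ _ hc)
  rcases hclass x with hx | hx <;> rcases hclass y with hy | hy
  · exact htrans hx (hsymm hy)
  · exact (hbt (htrans (hsymm (h ▸ hbot x hx)) (htop y hy))).elim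
  · exact (hbt (htrans (hsymm (h ▸ hbot y hy)) (htop x hx))).elim
  · exact htrans hx (hsymm hy)

lemma restrict [DistribLattice A] [OrderBot A] (hp : IsPseudocomplement star)
    (hμ : IsPCong star μ) (d : A) : IsPCong star fun x y => μ (x ⊓ d) (y ⊓ d) := by
  obtain ⟨⟨hrefl, hsymm, htrans⟩, hinf, hsup, hstar⟩ := hμ
  refine ⟨⟨fun x => hrefl _, hsymm, htrans⟩, fun a b c e hab hce => ?_,
    fun a b c e hab hce => ?_, fun a b hab => ?_⟩
  · dsimp only
    rw [inf_inf_distrib_right, inf_inf_distrib_right b]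
    exact hinf _ _ _ _ hab hce
  · simpa only [inf_sup_right] using hsup _ _ _ _ hab hce
  · simpa only [hp.star_inf_inf_right] using hinf _ _ _ _ (hstar _ _ hab) (hrefl d)

lemma eq_restrict_and_restrict [DistribLattice A] [OrderTop A] (hμ : IsPCong star μ) {d e : A}
    (hde : μ (d ⊔ e) ⊤) : μ = fun x y => μ (x ⊓ d) (y ⊓ d) ∧ μ (x ⊓ e) (y ⊓ e) := by
  obtain ⟨⟨hrefl, hsymm, htrans⟩, hinf, hsup, -⟩ := hμ
  have hsplit : ∀ x, μ ((x ⊓ d) ⊔ (x ⊓ e)) x := fun x => by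
    simpa only [inf_sup_left, inf_top_eq] using hinf _ _ _ _ (hrefl x) hde
  ext x y
  exact ⟨fun h => ⟨hinf _ _ _ _ h (hrefl d), hinf _ _ _ _ h (hrefl e)⟩,
    fun ⟨hd, he⟩ => htrans (hsymm (hsplit x)) (htrans (hsup _ _ _ _ hd he) (hsplit y))⟩

end IsPCong

namespace IsCMI

variable {star : A → A} {μ : A → A → Prop}

lemma not_rel_bot_top [Lattice A] [BoundedOrder A] (hμ : IsCMI star μ) : ¬ μ ⊥ ⊤ := fun h =>
  hμ.2 ∅ (by simp) (by ext x y; simp only [Set.mem_empty_iff_false, IsEmpty.forall_iff,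
    forall_const, iff_true]; exact hμ.1.rel_of_rel_bot_top h x y)

lemma eq_or_eq_of_eq_and [Lattice A] (hμ : IsCMI star μ) {θ₁ θ₂ : A → A → Prop}
    (h₁ : IsPCong star θ₁) (h₂ : IsPCong star θ₂) (h : μ = fun x y => θ₁ x y ∧ θ₂ x y) : μ = θ₁ ∨ μ = θ₂ :=
  hμ.2 {θ₁, θ₂} (by simp [h₁, h₂]) (by simpa using h)

lemma rel_bot_or_rel_top_of_glivenko [DistribLattice A] [BoundedOrder A]
    (hp : IsPseudocomplement star) (hμ : IsCMI star μ)
    (hgliv : ∀ x y : A, star (star x) = star (star y) → μ x y) (c : A) : μ c ⊥ ∨ μ c ⊤ := by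
  obtain ⟨⟨hrefl, -, htrans⟩, -, -, hstar⟩ := hμ.1
  have hdense : μ (c ⊔ star c) ⊤ := hgliv _ _ (by rw [hp.star_sup_star_self, hp.star_top])
  rcases hμ.eq_or_eq_of_eq_and (hμ.1.restrict hp c) (hμ.1.restrict hp (star c))
    (hμ.1.eq_restrict_and_restrict hdense) with h | h
  · have hc_star : μ (star c) ⊥ := by
      rw [h]
      simpa only [hp.star_inf_self_s16, bot_inf_eq] using hrefl ⊥
    have hc : μ c (star (star c)) := hgliv _ _ (by rw [hp.star_star_star])
    right
    simpa only [hp.star_bot] using htrans hc (hstar _ _ hc_star)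
  · left
    rw [h]
    simpa only [hp.inf_star_self, bot_inf_eq] using hrefl ⊥

end IsCMI

/-- A completely meet-irreducible congruence of a p-algebra contains the Glivenko
relation (`x** = y**` implies `x μ y`) iff it has exactly two classes. -/
theorem stmt16 [DistribLattice A] [BoundedOrder A] (star : A → A)
    (hp : ∀ x y : A, x ⊓ y = ⊥ ↔ x ≤ star y)
    (μ : A → A → Prop) (hμ : IsCMI star μ) :
    (∀ x y : A, star (star x) = star (star y) → μ x y) ↔ HasTwoClasses μ := by
  rw [hμ.1.hasTwoClasses_iff]
  exact ⟨fun hgliv => ⟨hμ.not_rel_bot_top, hμ.rel_bot_or_rel_top_of_glivenko hp hgliv⟩,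
    fun ⟨hbt, hclass⟩ _ _ => hμ.1.rel_of_star_star_eq hp hbt hclass⟩
end

section
/- Let A be a finite p-algebra. An element r ∈ A is regular (i.e., r** = r) if and only if there exists a set S of atoms of A such that r = (⨆_{a ∈ S} a)**. In other words, the set of regular elements of A equals { (⨆_{a ∈ S} a)** : S a subset of the set of atoms of A }. -/
variable {A : Type*}

/-- In a finite p-algebra, the regular elements (`r** = r`) are exactly the elements
of the form `(⨆_{a ∈ S} a)**` for a set `S` of atoms. -/
theorem stmt19 [DistribLattice A] [BoundedOrder A] [Finite A] (star : A → A)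
    (hp : ∀ x y : A, x ⊓ y = ⊥ ↔ x ≤ star y) (r : A) :
    star (star r) = r ↔
      ∃ S : Finset A, (∀ a ∈ S, IsAtom a) ∧ r = star (star (S.sup id)) := by
  classical
  -- basic facts about star
  have hmeet : ∀ x : A, x ⊓ star x = ⊥ := by
    intro x
    have : star x ⊓ x = ⊥ := (hp (star x) x).mpr le_rfl
    rwa [inf_comm] at this
  have hle2 : ∀ x : A, x ≤ star (star x) := fun x => (hp x (star x)).mp (hmeet x)
  have hanti : ∀ x y : A, x ≤ y → star y ≤ star x := by
    intro x y hxy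
    apply (hp (star y) x).mp
    have : star y ⊓ x ≤ star y ⊓ y := inf_le_inf_left _ hxy
    rw [inf_comm (star y) y, hmeet y] at this
    exact le_bot_iff.mp this
  have h3 : ∀ x : A, star (star (star x)) = star x :=
    fun x => le_antisymm (hanti _ _ (hle2 x)) (hle2 (star x))
  constructor
  · intro hr
    have := Fintype.ofFinite A
    refine ⟨Finset.univ.filter (fun a => IsAtom a ∧ a ≤ r), ?_, ?_⟩
    · intro a ha
      exact ((Finset.mem_filter.mp ha).2).1
    · set S := Finset.univ.filter (fun a => IsAtom a ∧ a ≤ r) with hS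
      have hsr : S.sup id ≤ r := by
        apply Finset.sup_le
        intro a ha
        exact ((Finset.mem_filter.mp ha).2).2
      have h1 : star (star (S.sup id)) ≤ r := by
        rw [← hr]
        exact hanti _ _ (hanti _ _ hsr)
      have h2 : r ≤ star (star (S.sup id)) := by
        apply (hp r (star (S.sup id))).mp
        by_contra hne
        obtain ⟨a, haatom, hale⟩ :=
          (eq_bot_or_exists_atom_le (r ⊓ star (S.sup id))).resolve_left hne
        have haS : a ∈ S := by
          simp only [hS, Finset.mem_filter, Finset.mem_univ, true_and]
          exact ⟨haatom, hale.trans inf_le_left⟩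
        have h4 : a ≤ S.sup id := Finset.le_sup (f := id) haS
        have h5 : a ≤ star (S.sup id) := hale.trans inf_le_right
        have : a ≤ ⊥ := by
          rw [← hmeet (S.sup id)]
          exact le_inf h4 h5
        exact haatom.1 (le_bot_iff.mp this)
      exact le_antisymm h2 h1
  · rintro ⟨S, -, rfl⟩
    exact h3 _
end
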